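/- arXiv:2009.11964 — 3 statements merged into one kernel-verified Lean document; each statement's English description precedes it below -/
import Mathlib

section
/- Let 𝒢 be a groupoid, A a 𝒢-C*-algebra, and φ: ℋ → 𝒢 a faithful groupoid morphism (injective on morphism sets). Regard A as an ℋ-C*-algebra by precomposition with φ. Then the natural *-functor id_A φ: Aℋ → A𝒢, given by x ↦ φ(x) on objects and a u_g ↦ a u_{φ(g)} on morphisms, is isometric for the reduced norms and extends to an isometric C*-functor id_A ⋊_r φ: A ⋊_r ℋ → A ⋊_r 𝒢. In particular, for all x, y ∈ Ob(ℋ), z ∈ Ob(ℋ) with ℋ(z,x) nonempty, and f ∈ Aℋ(x,y), one has ‖Λ_{A,ℋ,z}(f)‖ = ‖Λ_{A,𝒢,φ(z)}((id_A φ)(f))‖. -/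
open CategoryTheory

universe u v

/-- A `𝒢`-C*-algebra: a functor `x ↦ Aₓ` from the (discrete) groupoid `𝒢` to the
category of C*-algebras; the action of `g : x ⟶ y` is denoted `α_g = act g : Aₓ → A_y`. -/
structure GCStarAlg (𝒢 : Type u) [Groupoid 𝒢] where
  fiber : 𝒢 → Type v
  [alg : ∀ x, NonUnitalCStarAlgebra (fiber x)]
  act : ∀ {x y : 𝒢}, (x ⟶ y) → (fiber x ≃⋆ₐ[ℂ] fiber y)
  act_id : ∀ x : 𝒢, act (𝟙 x) = StarAlgEquiv.refl ℂ (fiber x)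
  act_comp : ∀ {x y z : 𝒢} (g : x ⟶ y) (h : y ⟶ z), act (g ≫ h) = (act g).trans (act h)

attribute [instance] GCStarAlg.alg

namespace GCStarAlg

variable {𝒢 : Type u} [Groupoid 𝒢] (A : GCStarAlg 𝒢)

/-- The morphism set `A𝒢(x,y)` of the convolution category: finite formal sums
`Σ aᵢ u_{gᵢ}` with `gᵢ ∈ 𝒢(x,y)` and `aᵢ ∈ A_y`, encoded as finitely supported functions
`g ↦ (coefficient of u_g)`. -/
abbrev Conv (x y : 𝒢) : Type _ := (x ⟶ y) →₀ A.fiber y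

/-- Composition in the convolution category `A𝒢`:
`(a u_g) · (b u_h) = a α_g(b) u_{gh}` (here `gh = h ≫ g`). -/
noncomputable def convMul {x y z : 𝒢} (f₂ : A.Conv y z) (f₁ : A.Conv x y) : A.Conv x z :=
  f₂.sum fun g a => f₁.sum fun h b => Finsupp.single (h ≫ g) (a * A.act g b)

/-- The involution of the convolution category `A𝒢`: `(a u_g)* = α_{g⁻¹}(a)* u_{g⁻¹}`. -/
noncomputable def convStar {x y : 𝒢} (f : A.Conv x y) : A.Conv y x :=
  f.sum fun g a => Finsupp.single (Groupoid.inv g) (star (A.act (Groupoid.inv g) a))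

/-- Finitely supported vectors of the Hilbert `A_z`-module `ℓ²(𝒢(z,x), A_z)`; they form a
dense subspace, so operator norms may be computed on them. -/
abbrev PreL2 (z x : 𝒢) : Type _ := (z ⟶ x) →₀ A.fiber z

/-- The Hilbert-module norm `‖ξ‖ = ‖Σ_h ξ(h)* ξ(h)‖^{1/2}` of a finitely supported vector
of `ℓ²(𝒢(z,x), A_z)`. -/
noncomputable def preNorm {z x : 𝒢} (ξ : A.PreL2 z x) : ℝ :=
  Real.sqrt ‖ξ.sum fun _ b => star b * b‖

/-- The regular representation `Λ_{A,𝒢,z}`: `f ∈ A𝒢(x,y)` maps (finitely supported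
vectors of) `ℓ²(𝒢(z,x), A_z)` to `ℓ²(𝒢(z,y), A_z)` by `(Λ(a u_g) ξ)(h) = α_{h⁻¹}(a) ξ(g⁻¹ h)`. -/
noncomputable def lam {x y z : 𝒢} (f : A.Conv x y) (ξ : A.PreL2 z x) : A.PreL2 z y :=
  f.sum fun g a => ξ.sum fun h b =>
    Finsupp.single (h ≫ g) ((A.act (Groupoid.inv (h ≫ g)) a) * b)

/-- The norm `‖Λ_{A,𝒢,z}(f)‖` of the adjointable operator
`Λ_{A,𝒢,z}(f) : ℓ²(𝒢(z,x), A_z) → ℓ²(𝒢(z,y), A_z)`, computed as the operator norm on the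
dense subspace of finitely supported vectors. -/
noncomputable def opNorm {x y : 𝒢} (f : A.Conv x y) (z : 𝒢) : ℝ :=
  sSup {r : ℝ | ∃ ξ : A.PreL2 z x, A.preNorm ξ ≤ 1 ∧ r = A.preNorm (A.lam f ξ)}

/-- The reduced norm `‖f‖_r = ‖Λ_{A,𝒢,z}(f)‖` of `f ∈ A𝒢(x,y)`: it is independent of the
choice of `z` with `𝒢(z,x) ≠ ∅`, so that taking the supremum over all `z` (the value being
`0` for the remaining `z`) gives a canonical description. -/
noncomputable def redNorm {x y : 𝒢} (f : A.Conv x y) : ℝ :=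
  ⨆ z : 𝒢, A.opNorm f z

end GCStarAlg

/-- The `ℋ`-C*-algebra obtained from a `𝒢`-C*-algebra by precomposition with a groupoid
morphism `φ : ℋ → 𝒢`. -/
@[simps] def GCStarAlg.restrict {ℋ 𝒢 : Type u} [Groupoid ℋ] [Groupoid 𝒢]
    (A : GCStarAlg 𝒢) (φ : ℋ ⥤ 𝒢) : GCStarAlg ℋ where
  fiber x := A.fiber (φ.obj x)
  act g := A.act (φ.map g)
  act_id x := by show A.act (φ.map (𝟙 x)) = _; rw [φ.map_id, A.act_id]
  act_comp g h := by show A.act (φ.map (g ≫ h)) = _; rw [φ.map_comp, A.act_comp]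

/-- The natural *-functor `id_A φ : Aℋ → A𝒢`, given by `x ↦ φ(x)` on objects and
`a u_g ↦ a u_{φ(g)}` on morphisms. -/
noncomputable def GCStarAlg.mapFaithful {ℋ 𝒢 : Type u} [Groupoid ℋ] [Groupoid 𝒢]
    (A : GCStarAlg 𝒢) (φ : ℋ ⥤ 𝒢) {x y : ℋ} (f : (A.restrict φ).Conv x y) :
    A.Conv (φ.obj x) (φ.obj y) :=
  Finsupp.mapDomain (fun g => φ.map g) f

/-!
The embedding `ℓ²(ℋ(z, x), A_{φ(z)}) → ℓ²(𝒢(φ(z), φ(x)), A_{φ(z)})` induced by the faithful `φ`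
is isometric and intertwines `Λ_{A,ℋ,z}(f)` with `Λ_{A,𝒢,φ(z)}((id_A φ)(f))`, which gives `≤`.
Conversely, fix `e ∈ ℋ(z, x)`: every basis vector `b δ_h` of the larger space is the translate by
`h ≫ φ(e)⁻¹` of a vector `b' δ_{φ(e)}` in the image, and translations commute with `Λ` and
preserve norms, so `‖Λ_{A,𝒢,φ(z)}(f) ξ‖ ≤ ‖Λ_{A,ℋ,z}(f)‖ ∑_h ‖ξ(h)‖`. For self-adjoint `f`
the constant `∑_h ‖ξ(h)‖` disappears after applying this to `f^(2^n)`, using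
`‖Λ(f) ξ‖^(2^n) ≤ ‖Λ(f^(2^n)) ξ‖` for `‖ξ‖ ≤ 1` and taking `2ⁿ`-th roots; the C*-inequality
`‖Λ(f)‖² ≤ ‖Λ(f* f)‖` then handles all `f`. The reduced norm is `‖Λ_{A,𝒢,x}(f)‖`, since
translations make `‖Λ_{A,𝒢,z}(f)‖` constant on the component of `x` and it vanishes elsewhere.
-/

theorem le_of_forall_pow_two_pow_le_mul {r M C : ℝ} (hM : 0 ≤ M)
    (h : ∀ n : ℕ, r ^ 2 ^ n ≤ M ^ 2 ^ n * C) : r ≤ M := by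
  rcases hM.eq_or_lt with rfl | hM
  · simpa using h 0
  by_contra! hlt
  have hq : 1 < r / M := (one_lt_div hM).mpr hlt
  obtain ⟨n, hn⟩ := pow_unbounded_of_one_lt C hq
  have hC : (r / M) ^ 2 ^ n ≤ C := by
    rw [div_pow, div_le_iff₀ (by positivity), mul_comm]
    exact h n
  linarith [pow_le_pow_right₀ hq.le (Nat.lt_two_pow_self (n := n)).le]

section CStarSums

variable {B : Type*} [NonUnitalCStarAlgebra B] {ι : Type*}

open scoped InnerProductSpace WithCStarModule in
/-- Cauchy–Schwarz in the Hilbert `Bᵐᵒᵖ`-module of columns, whose inner product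
`∑ dᵢ * star cᵢ` computed in `Bᵐᵒᵖ` is `∑ star cᵢ * dᵢ`. -/
theorem norm_sum_star_mul_le [Fintype ι] (c d : ι → B) :
    ‖∑ i, star (c i) * d i‖ ≤ √‖∑ i, star (c i) * c i‖ * √‖∑ i, star (d i) * d i‖ := by
  let _ := CStarAlgebra.spectralOrder Bᵐᵒᵖ
  have := CStarAlgebra.spectralOrderedRing Bᵐᵒᵖ
  let column : (ι → B) → C⋆ᵐᵒᵈ(Bᵐᵒᵖ, ι → Bᵐᵒᵖ) := fun c =>
    (WithCStarModule.equiv _ _).symm fun i => MulOpposite.op (c i)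
  simpa [column, WithCStarModule.pi_inner, WithCStarModule.pi_norm, WithCStarModule.inner_def,
    ← MulOpposite.op_star, ← MulOpposite.op_mul, ← Finset.op_sum, MulOpposite.norm_op] using
    CStarModule.norm_inner_le (A := Bᵐᵒᵖ) (C⋆ᵐᵒᵈ(Bᵐᵒᵖ, ι → Bᵐᵒᵖ)) (x := column c) (y := column d)

theorem norm_sum_star_mul_mul_le (s : Finset ι) (e d : ι → B) {K : ℝ}
    (he : ∀ i ∈ s, ‖e i‖ ≤ K) :
    ‖∑ i ∈ s, star (e i * d i) * (e i * d i)‖ ≤ K ^ 2 * ‖∑ i ∈ s, star (d i) * d i‖ := by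
  let _ := CStarAlgebra.spectralOrder B
  have := CStarAlgebra.spectralOrderedRing B
  have hle : ∑ i ∈ s, star (e i * d i) * (e i * d i) ≤ K ^ 2 • ∑ i ∈ s, star (d i) * d i := by
    rw [Finset.smul_sum]
    refine Finset.sum_le_sum fun i hi => ?_
    calc star (e i * d i) * (e i * d i) = star (d i) * (star (e i) * e i) * d i := by
          simp only [star_mul, mul_assoc]
      _ ≤ ‖star (e i) * e i‖ • (star (d i) * d i) :=
          CStarAlgebra.star_left_conjugate_le_norm_smul
      _ ≤ K ^ 2 • (star (d i) * d i) := by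
          rw [CStarRing.norm_star_mul_self, ← sq]
          gcongr
          · exact star_mul_self_nonneg _
          · exact he i hi
  have hK : 0 ≤ K ^ 2 := sq_nonneg K
  simpa [norm_smul, abs_of_nonneg hK] using CStarAlgebra.norm_le_norm_of_nonneg_of_le
    (Finset.sum_nonneg fun i _ => star_mul_self_nonneg _) hle

end CStarSums

namespace Finsupp

variable {ι κ B C : Type*} [NonUnitalCStarAlgebra B] [NonUnitalCStarAlgebra C]

noncomputable def cstarInner (ξ ζ : ι →₀ B) : B := ξ.sum fun i b => star b * ζ i

theorem cstarInner_eq_sum_of_support_subset (ξ ζ : ι →₀ B) {s : Finset ι}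
    (hs : ξ.support ⊆ s) : cstarInner ξ ζ = ∑ i ∈ s, star (ξ i) * ζ i :=
  Finset.sum_subset hs fun i _ hi => by simp [notMem_support_iff.mp hi]

@[simp] theorem cstarInner_zero_left (ζ : ι →₀ B) : cstarInner 0 ζ = 0 := sum_zero_index

@[simp] theorem cstarInner_zero_right (ξ : ι →₀ B) : cstarInner ξ 0 = 0 := by
  simp [cstarInner]

theorem cstarInner_add_left (ξ₁ ξ₂ ζ : ι →₀ B) :
    cstarInner (ξ₁ + ξ₂) ζ = cstarInner ξ₁ ζ + cstarInner ξ₂ ζ :=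
  sum_add_index' (fun _ => by simp) fun _ _ _ => by rw [star_add, add_mul]

theorem cstarInner_add_right (ξ ζ₁ ζ₂ : ι →₀ B) :
    cstarInner ξ (ζ₁ + ζ₂) = cstarInner ξ ζ₁ + cstarInner ξ ζ₂ := by
  simp only [cstarInner, add_apply, mul_add, sum_add]

theorem cstarInner_single_left (i : ι) (b : B) (ζ : ι →₀ B) :
    cstarInner (single i b) ζ = star b * ζ i :=
  sum_single_index (by rw [star_zero, zero_mul])

theorem star_cstarInner (ξ ζ : ι →₀ B) : star (cstarInner ξ ζ) = cstarInner ζ ξ := by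
  classical
  rw [cstarInner_eq_sum_of_support_subset ξ ζ (Finset.subset_union_left (s₂ := ζ.support)),
    cstarInner_eq_sum_of_support_subset ζ ξ (Finset.subset_union_right (s₁ := ξ.support)),
    star_sum]
  simp only [star_mul, star_star]

theorem cstarInner_smul_self (t : ℝ) (ξ : ι →₀ B) :
    cstarInner (t • ξ) (t • ξ) = (t * t) • cstarInner ξ ξ := by
  rw [cstarInner_eq_sum_of_support_subset _ _ support_smul, cstarInner, Finsupp.sum,
    Finset.smul_sum]
  simp only [smul_apply, star_smul, star_trivial, smul_mul_smul_comm]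

theorem norm_cstarInner_le (ξ ζ : ι →₀ B) :
    ‖cstarInner ξ ζ‖ ≤ √‖cstarInner ξ ξ‖ * √‖cstarInner ζ ζ‖ := by
  classical
  let s := ξ.support ∪ ζ.support
  have h := norm_sum_star_mul_le (fun i : s => ξ i) (fun i : s => ζ i)
  simp only [Finset.sum_coe_sort s fun i => star (ξ i) * ζ i,
    Finset.sum_coe_sort s fun i => star (ξ i) * ξ i,
    Finset.sum_coe_sort s fun i => star (ζ i) * ζ i] at h
  rwa [cstarInner_eq_sum_of_support_subset ξ ζ Finset.subset_union_left,
    cstarInner_eq_sum_of_support_subset ξ ξ Finset.subset_union_left,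
    cstarInner_eq_sum_of_support_subset ζ ζ Finset.subset_union_right]

theorem cstarInner_sum_single_self {ψ : ι → κ} (hψ : ψ.Injective) (F : ι → B → C)
    (hF : ∀ i, F i 0 = 0) (ξ : ι →₀ B) :
    cstarInner (ξ.sum fun i b => single (ψ i) (F i b)) (ξ.sum fun i b => single (ψ i) (F i b))
      = ∑ i ∈ ξ.support, star (F i (ξ i)) * F i (ξ i) := by
  classical
  have happly : ∀ i, (ξ.sum fun i b => single (ψ i) (F i b)) (ψ i) = F i (ξ i) := by
    intro i
    rw [Finsupp.sum_apply, Finsupp.sum, Finset.sum_eq_single i]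
    · exact single_eq_same
    · exact fun j _ hji => single_eq_of_ne (hψ.ne hji).symm
    · intro hi
      rw [notMem_support_iff.mp hi, hF, single_zero, zero_apply]
  have hsupp : (ξ.sum fun i b => single (ψ i) (F i b)).support ⊆ ξ.support.image ψ :=
    support_sum.trans <| Finset.biUnion_subset.mpr fun i hi =>
      support_single_subset.trans (Finset.singleton_subset_iff.mpr (Finset.mem_image_of_mem ψ hi))
  rw [cstarInner_eq_sum_of_support_subset _ _ hsupp, Finset.sum_image hψ.injOn]
  simp only [happly]

theorem cstarInner_mapDomain_self {ψ : ι → κ} (hψ : ψ.Injective) (ξ : ι →₀ B) :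
    cstarInner (mapDomain ψ ξ) (mapDomain ψ ξ) = cstarInner ξ ξ :=
  cstarInner_sum_single_self hψ (fun _ b => b) (fun _ => rfl) ξ

theorem cstarInner_mapRange_self (w : B ≃⋆ₐ[ℂ] C) (ξ : ι →₀ B) :
    cstarInner (mapRange w (map_zero w) ξ) (mapRange w (map_zero w) ξ) = w (cstarInner ξ ξ) := by
  classical
  rw [cstarInner_eq_sum_of_support_subset _ _ support_mapRange, cstarInner, Finsupp.sum, map_sum]
  simp only [mapRange_apply, map_mul, map_star]

end Finsupp

namespace GCStarAlg

open Finsupp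

variable {𝒢 : Type u} [Groupoid 𝒢] (A : GCStarAlg 𝒢)

@[simp] theorem act_act {x y z : 𝒢} (g : x ⟶ y) (h : y ⟶ z) (a : A.fiber x) :
    A.act h (A.act g a) = A.act (g ≫ h) a := by
  rw [A.act_comp]; rfl

@[simp] theorem act_id_apply (x : 𝒢) (a : A.fiber x) : A.act (𝟙 x) a = a := by
  rw [A.act_id]; rfl

section Convolution

variable {x y z w : 𝒢}

theorem convMul_single_single (g₂ : y ⟶ z) (a₂ : A.fiber z) (g₁ : x ⟶ y) (a₁ : A.fiber y) :
    A.convMul (single g₂ a₂) (single g₁ a₁) = single (g₁ ≫ g₂) (a₂ * A.act g₂ a₁) := by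
  rw [convMul, sum_single_index, sum_single_index] <;> simp

theorem convStar_single (g : x ⟶ y) (a : A.fiber y) :
    A.convStar (single g a) = single (Groupoid.inv g) (star (A.act (Groupoid.inv g) a)) := by
  rw [convStar, sum_single_index]
  simp

theorem lam_single_single (g : x ⟶ y) (a : A.fiber y) (h : z ⟶ x) (b : A.fiber z) :
    A.lam (single g a) (single h b) = single (h ≫ g) (A.act (Groupoid.inv (h ≫ g)) a * b) := by
  rw [lam, sum_single_index, sum_single_index] <;> simp

@[simp] theorem convMul_zero_left (f₁ : A.Conv x y) : A.convMul (0 : A.Conv y z) f₁ = 0 :=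
  sum_zero_index

@[simp] theorem convMul_zero_right (f₂ : A.Conv y z) : A.convMul f₂ (0 : A.Conv x y) = 0 := by
  simp [convMul]

theorem convMul_add_left (f₂ f₂' : A.Conv y z) (f₁ : A.Conv x y) :
    A.convMul (f₂ + f₂') f₁ = A.convMul f₂ f₁ + A.convMul f₂' f₁ :=
  sum_add_index' (fun _ => by simp) fun _ _ _ => by
    rw [← sum_add]; simp only [add_mul, single_add]

theorem convMul_add_right (f₂ : A.Conv y z) (f₁ f₁' : A.Conv x y) :
    A.convMul f₂ (f₁ + f₁') = A.convMul f₂ f₁ + A.convMul f₂ f₁' := by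
  simp only [convMul, ← sum_add]
  exact sum_congr fun _ _ =>
    sum_add_index' (fun _ => by simp) fun _ _ _ => by rw [map_add, mul_add, single_add]

@[simp] theorem convStar_zero : A.convStar (0 : A.Conv x y) = 0 := sum_zero_index

theorem convStar_add (f f' : A.Conv x y) : A.convStar (f + f') = A.convStar f + A.convStar f' :=
  sum_add_index' (fun _ => by simp) fun _ _ _ => by rw [map_add, star_add, single_add]

@[simp] theorem lam_zero_left (ξ : A.PreL2 z x) : A.lam (0 : A.Conv x y) ξ = 0 := sum_zero_index

@[simp] theorem lam_zero_right (f : A.Conv x y) : A.lam f (0 : A.PreL2 z x) = 0 := by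
  simp [lam]

theorem lam_add_left (f f' : A.Conv x y) (ξ : A.PreL2 z x) :
    A.lam (f + f') ξ = A.lam f ξ + A.lam f' ξ :=
  sum_add_index' (fun _ => by simp) fun _ _ _ => by
    rw [← sum_add]; simp only [map_add, add_mul, single_add]

theorem lam_add_right (f : A.Conv x y) (ξ ξ' : A.PreL2 z x) :
    A.lam f (ξ + ξ') = A.lam f ξ + A.lam f ξ' := by
  simp only [lam, ← sum_add]
  exact sum_congr fun _ _ =>
    sum_add_index' (fun _ => by simp) fun _ _ _ => by rw [mul_add, single_add]

theorem lam_convMul (f₂ : A.Conv y w) (f₁ : A.Conv x y) (ξ : A.PreL2 z x) :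
    A.lam (A.convMul f₂ f₁) ξ = A.lam f₂ (A.lam f₁ ξ) := by
  induction f₂ using Finsupp.induction_linear with
  | zero => simp
  | add p q hp hq => rw [convMul_add_left, lam_add_left, lam_add_left, hp, hq]
  | single g₂ a₂ =>
    induction f₁ using Finsupp.induction_linear with
    | zero => simp
    | add p q hp hq => rw [convMul_add_right, lam_add_left, lam_add_left, lam_add_right, hp, hq]
    | single g₁ a₁ =>
      induction ξ using Finsupp.induction_linear with
      | zero => simp
      | add p q hp hq => rw [lam_add_right, lam_add_right, hp, hq, lam_add_right]
      | single h b =>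
        have hinv : g₂ ≫ Groupoid.inv (h ≫ g₁ ≫ g₂) = Groupoid.inv (h ≫ g₁) := by
          simp [Groupoid.inv_eq_inv]
        simp only [convMul_single_single, lam_single_single, map_mul, act_act, Category.assoc,
          mul_assoc, hinv]

theorem convStar_convStar (f : A.Conv x y) : A.convStar (A.convStar f) = f := by
  induction f using Finsupp.induction_linear with
  | zero => simp
  | add p q hp hq => rw [convStar_add, convStar_add, hp, hq]
  | single g a =>
    simp only [convStar_single, map_star, star_star, act_act, Groupoid.inv_eq_inv,
      IsIso.inv_inv, IsIso.inv_hom_id, act_id_apply]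

theorem convStar_convMul (f₂ : A.Conv y z) (f₁ : A.Conv x y) :
    A.convStar (A.convMul f₂ f₁) = A.convMul (A.convStar f₁) (A.convStar f₂) := by
  induction f₂ using Finsupp.induction_linear with
  | zero => simp
  | add p q hp hq => rw [convMul_add_left, convStar_add, convStar_add, hp, hq, convMul_add_right]
  | single g₂ a₂ =>
    induction f₁ using Finsupp.induction_linear with
    | zero => simp
    | add p q hp hq =>
      rw [convMul_add_right, convStar_add, convStar_add, hp, hq, convMul_add_left]
    | single g₁ a₁ =>
      simp only [convMul_single_single, convStar_single, map_mul, map_star, star_mul, act_act,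
        Groupoid.inv_eq_inv, IsIso.inv_comp, IsIso.hom_inv_id_assoc]

theorem cstarInner_lam_left (f : A.Conv x y) (ξ : A.PreL2 z x) (ζ : A.PreL2 z y) :
    cstarInner (A.lam f ξ) ζ = cstarInner ξ (A.lam (A.convStar f) ζ) := by
  induction f using Finsupp.induction_linear with
  | zero => simp
  | add p q hp hq =>
    rw [lam_add_left, convStar_add, lam_add_left, cstarInner_add_left, cstarInner_add_right, hp, hq]
  | single g a =>
    induction ξ using Finsupp.induction_linear with
    | zero => simp
    | add p q hp hq => rw [lam_add_right, cstarInner_add_left, cstarInner_add_left, hp, hq]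
    | single h b =>
      induction ζ using Finsupp.induction_linear with
      | zero => simp
      | add p q hp hq => rw [lam_add_right, cstarInner_add_right, cstarInner_add_right, hp, hq]
      | single k c =>
        rw [lam_single_single, convStar_single, lam_single_single, cstarInner_single_left,
          cstarInner_single_left]
        by_cases hk : h ≫ g = k
        · subst hk
          simp [Groupoid.inv_eq_inv, map_star, mul_assoc]
        · have hk' : k ≫ Groupoid.inv g ≠ h := fun hc => hk (by simp [← hc, Groupoid.inv_eq_inv])
          rw [single_eq_of_ne' (Ne.symm hk), single_eq_of_ne' hk', mul_zero, mul_zero]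

end Convolution

section PreNorm

variable {x y z : 𝒢}

theorem preNorm_eq_sqrt_norm_cstarInner (ξ : A.PreL2 z x) :
    A.preNorm ξ = √‖cstarInner ξ ξ‖ := rfl

theorem preNorm_nonneg (ξ : A.PreL2 z x) : 0 ≤ A.preNorm ξ := Real.sqrt_nonneg _

theorem preNorm_sq (ξ : A.PreL2 z x) : A.preNorm ξ ^ 2 = ‖cstarInner ξ ξ‖ :=
  Real.sq_sqrt (norm_nonneg _)

@[simp] theorem preNorm_zero : A.preNorm (0 : A.PreL2 z x) = 0 := by
  simp [preNorm_eq_sqrt_norm_cstarInner]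

theorem preNorm_single (h : z ⟶ x) (b : A.fiber z) : A.preNorm (single h b) = ‖b‖ := by
  rw [preNorm_eq_sqrt_norm_cstarInner, cstarInner_single_left, single_eq_same,
    CStarRing.norm_star_mul_self, Real.sqrt_mul_self (norm_nonneg b)]

theorem preNorm_smul (t : ℝ) (ξ : A.PreL2 z x) : A.preNorm (t • ξ) = |t| * A.preNorm ξ := by
  rw [preNorm_eq_sqrt_norm_cstarInner, preNorm_eq_sqrt_norm_cstarInner, cstarInner_smul_self,
    norm_smul, Real.norm_eq_abs, abs_mul_self, Real.sqrt_mul (mul_self_nonneg t),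
    Real.sqrt_mul_self_eq_abs]

theorem norm_cstarInner_le_preNorm_mul (ξ ζ : A.PreL2 z x) :
    ‖cstarInner ξ ζ‖ ≤ A.preNorm ξ * A.preNorm ζ :=
  norm_cstarInner_le ξ ζ

theorem preNorm_add_le (ξ ζ : A.PreL2 z x) : A.preNorm (ξ + ζ) ≤ A.preNorm ξ + A.preNorm ζ := by
  have hξζ := A.norm_cstarInner_le_preNorm_mul ξ ζ
  have hζξ : ‖cstarInner ζ ξ‖ ≤ A.preNorm ξ * A.preNorm ζ := by
    rwa [← star_cstarInner, norm_star]
  have hsq : A.preNorm (ξ + ζ) ^ 2 ≤ (A.preNorm ξ + A.preNorm ζ) ^ 2 := by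
    rw [preNorm_sq, cstarInner_add_left, cstarInner_add_right, cstarInner_add_right]
    calc _ ≤ ‖cstarInner ξ ξ‖ + ‖cstarInner ξ ζ‖ + (‖cstarInner ζ ξ‖ + ‖cstarInner ζ ζ‖) :=
          (norm_add_le _ _).trans (add_le_add (norm_add_le _ _) (norm_add_le _ _))
      _ ≤ A.preNorm ξ ^ 2 + A.preNorm ξ * A.preNorm ζ
            + (A.preNorm ξ * A.preNorm ζ + A.preNorm ζ ^ 2) := by
          rw [preNorm_sq, preNorm_sq]
          exact add_le_add (add_le_add le_rfl hξζ) (add_le_add hζξ le_rfl)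
      _ = _ := by ring
  exact (pow_le_pow_iff_left₀ (A.preNorm_nonneg _)
    (add_nonneg (A.preNorm_nonneg _) (A.preNorm_nonneg _)) two_ne_zero).mp hsq

theorem preNorm_sum_le {ι : Type*} (s : Finset ι) (ξ : ι → A.PreL2 z x) :
    A.preNorm (∑ i ∈ s, ξ i) ≤ ∑ i ∈ s, A.preNorm (ξ i) :=
  Finset.le_sum_of_subadditive _ A.preNorm_zero.le A.preNorm_add_le s ξ

end PreNorm

section Lam

variable {x y z : 𝒢}

theorem lam_smul (f : A.Conv x y) (t : ℝ) (ξ : A.PreL2 z x) :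
    A.lam f (t • ξ) = t • A.lam f ξ := by
  induction f using Finsupp.induction_linear with
  | zero => simp
  | add p q hp hq => rw [lam_add_left, lam_add_left, hp, hq, smul_add]
  | single g a =>
    induction ξ using Finsupp.induction_linear with
    | zero => simp
    | add p q hp hq => rw [smul_add, lam_add_right, lam_add_right, hp, hq, smul_add]
    | single h b =>
      rw [smul_single, lam_single_single, lam_single_single, mul_smul_comm, smul_single]

theorem lam_eq_sum_lam_single_left (f : A.Conv x y) (ξ : A.PreL2 z x) :
    A.lam f ξ = f.sum fun g a => A.lam (single g a) ξ := by
  conv_lhs => rw [← f.sum_single]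
  exact map_sum (AddMonoidHom.mk' (A.lam · ξ) fun f f' => A.lam_add_left f f' ξ) _ _

theorem lam_eq_sum_lam_single_right (f : A.Conv x y) (ξ : A.PreL2 z x) :
    A.lam f ξ = ξ.sum fun h b => A.lam f (single h b) := by
  conv_lhs => rw [← ξ.sum_single]
  exact map_sum (AddMonoidHom.mk' (A.lam f) (A.lam_add_right f)) _ _

theorem preNorm_lam_single_le (g : x ⟶ y) (a : A.fiber y) (ξ : A.PreL2 z x) :
    A.preNorm (A.lam (single g a) ξ) ≤ ‖a‖ * A.preNorm ξ := by
  have hlam : A.lam (single g a) ξ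
      = ξ.sum fun h b => single (h ≫ g) (A.act (Groupoid.inv (h ≫ g)) a * b) := by
    rw [lam, sum_single_index]
    simp
  rw [hlam, preNorm_eq_sqrt_norm_cstarInner, preNorm_eq_sqrt_norm_cstarInner,
    cstarInner_sum_single_self (fun _ _ => (cancel_mono g).mp) _ (fun _ => mul_zero _),
    ← Real.sqrt_sq (norm_nonneg a), ← Real.sqrt_mul (sq_nonneg _)]
  gcongr
  exact norm_sum_star_mul_mul_le _ _ _ fun _ _ => (StarAlgEquiv.norm_map _ a).le

theorem preNorm_lam_le (f : A.Conv x y) (ξ : A.PreL2 z x) :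
    A.preNorm (A.lam f ξ) ≤ (f.sum fun _ a => ‖a‖) * A.preNorm ξ := by
  rw [lam_eq_sum_lam_single_left, Finsupp.sum, Finsupp.sum, Finset.sum_mul]
  exact (A.preNorm_sum_le _ _).trans (Finset.sum_le_sum fun g _ => A.preNorm_lam_single_le _ _ ξ)

end Lam

section OpNorm

variable {x y w z : 𝒢}

theorem bddAbove_preNorm_lam (f : A.Conv x y) (z : 𝒢) :
    BddAbove {r : ℝ | ∃ ξ : A.PreL2 z x, A.preNorm ξ ≤ 1 ∧ r = A.preNorm (A.lam f ξ)} := by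
  refine ⟨f.sum fun _ a => ‖a‖, ?_⟩
  rintro _ ⟨ξ, hξ, rfl⟩
  have hf : 0 ≤ f.sum fun _ a => ‖a‖ := Finset.sum_nonneg fun _ _ => norm_nonneg _
  exact (A.preNorm_lam_le f ξ).trans (mul_le_of_le_one_right hf hξ)

theorem preNorm_lam_le_opNorm_of_preNorm_le_one (f : A.Conv x y) {ξ : A.PreL2 z x}
    (hξ : A.preNorm ξ ≤ 1) : A.preNorm (A.lam f ξ) ≤ A.opNorm f z :=
  le_csSup (A.bddAbove_preNorm_lam f z) ⟨ξ, hξ, rfl⟩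

theorem opNorm_nonneg (f : A.Conv x y) (z : 𝒢) : 0 ≤ A.opNorm f z := by
  simpa using A.preNorm_lam_le_opNorm_of_preNorm_le_one f (ξ := 0) (by simp)

theorem opNorm_le {f : A.Conv x y} {z : 𝒢} {c : ℝ}
    (h : ∀ ξ : A.PreL2 z x, A.preNorm ξ ≤ 1 → A.preNorm (A.lam f ξ) ≤ c) : A.opNorm f z ≤ c :=
  csSup_le ⟨0, 0, by simp, by simp⟩ fun _ ⟨ξ, hξ, hr⟩ => hr ▸ h ξ hξ

theorem preNorm_lam_sq_le (f : A.Conv x y) (ξ : A.PreL2 z x) :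
    A.preNorm (A.lam f ξ) ^ 2 ≤ A.preNorm ξ * A.preNorm (A.lam (A.convMul (A.convStar f) f) ξ) := by
  rw [preNorm_sq, cstarInner_lam_left, ← lam_convMul]
  exact A.norm_cstarInner_le_preNorm_mul _ _

theorem preNorm_lam_le_opNorm (f : A.Conv x y) (ξ : A.PreL2 z x) :
    A.preNorm (A.lam f ξ) ≤ A.opNorm f z * A.preNorm ξ := by
  rcases (A.preNorm_nonneg ξ).eq_or_lt with h0 | h0
  · have hsq := A.preNorm_lam_sq_le f ξ
    rw [← h0, zero_mul] at hsq
    rw [← h0, mul_zero]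
    nlinarith [A.preNorm_nonneg (A.lam f ξ)]
  · have h := A.preNorm_lam_le_opNorm_of_preNorm_le_one f (ξ := (A.preNorm ξ)⁻¹ • ξ)
      (by rw [preNorm_smul, abs_inv, abs_of_pos h0, inv_mul_cancel₀ h0.ne'])
    rwa [lam_smul, preNorm_smul, abs_inv, abs_of_pos h0, inv_mul_le_iff₀ h0, mul_comm] at h

theorem opNorm_convMul_le (f₂ : A.Conv y w) (f₁ : A.Conv x y) :
    A.opNorm (A.convMul f₂ f₁) z ≤ A.opNorm f₂ z * A.opNorm f₁ z :=
  A.opNorm_le fun ξ hξ => by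
    rw [lam_convMul]
    exact (A.preNorm_lam_le_opNorm f₂ _).trans <| mul_le_mul_of_nonneg_left
      (A.preNorm_lam_le_opNorm_of_preNorm_le_one f₁ hξ) (A.opNorm_nonneg f₂ z)

theorem opNorm_convStar_le (f : A.Conv x y) : A.opNorm (A.convStar f) z ≤ A.opNorm f z :=
  A.opNorm_le fun ζ hζ => by
    set r := A.preNorm (A.lam (A.convStar f) ζ)
    have hr : r ^ 2 ≤ A.opNorm f z * r := by
      rw [preNorm_sq, ← cstarInner_lam_left, ← star_cstarInner, norm_star]
      calc _ ≤ A.preNorm ζ * A.preNorm (A.lam f (A.lam (A.convStar f) ζ)) :=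
            A.norm_cstarInner_le_preNorm_mul _ _
        _ ≤ 1 * (A.opNorm f z * r) :=
            mul_le_mul hζ (A.preNorm_lam_le_opNorm _ _) (A.preNorm_nonneg _) zero_le_one
        _ = _ := one_mul _
    nlinarith [A.preNorm_nonneg (A.lam (A.convStar f) ζ), A.opNorm_nonneg f z]

theorem opNorm_convStar_mul_self (f : A.Conv x y) :
    A.opNorm (A.convMul (A.convStar f) f) z = A.opNorm f z ^ 2 := by
  refine le_antisymm ?_ ?_
  · rw [sq]
    exact (A.opNorm_convMul_le _ _).trans
      (mul_le_mul_of_nonneg_right (A.opNorm_convStar_le f) (A.opNorm_nonneg f z))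
  · refine (Real.le_sqrt (A.opNorm_nonneg _ _) (A.opNorm_nonneg _ _)).mp
      (A.opNorm_le fun ξ hξ => Real.le_sqrt_of_sq_le ((A.preNorm_lam_sq_le f ξ).trans ?_))
    exact (mul_le_of_le_one_left (A.preNorm_nonneg _) hξ).trans
      (A.preNorm_lam_le_opNorm_of_preNorm_le_one _ hξ)

end OpNorm

section Squaring

variable {x z : 𝒢}

noncomputable abbrev convSq (h : A.Conv x x) : A.Conv x x := A.convMul h h

theorem convStar_iterate_convSq {h : A.Conv x x} (hh : A.convStar h = h) (n : ℕ) :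
    A.convStar (A.convSq^[n] h) = A.convSq^[n] h := by
  induction n with
  | zero => exact hh
  | succ n ih => rw [Function.iterate_succ_apply', convStar_convMul, ih]

theorem opNorm_iterate_convSq_le (h : A.Conv x x) (z : 𝒢) (n : ℕ) :
    A.opNorm (A.convSq^[n] h) z ≤ A.opNorm h z ^ 2 ^ n := by
  induction n with
  | zero => simp
  | succ n ih =>
    rw [Function.iterate_succ_apply', pow_succ, pow_mul, sq]
    exact (A.opNorm_convMul_le _ _).trans
      (mul_le_mul ih ih (A.opNorm_nonneg _ _) (pow_nonneg (A.opNorm_nonneg _ _) _))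

theorem preNorm_lam_pow_le_lam_iterate_convSq {h : A.Conv x x} (hh : A.convStar h = h)
    {ξ : A.PreL2 z x} (hξ : A.preNorm ξ ≤ 1) (n : ℕ) :
    A.preNorm (A.lam h ξ) ^ 2 ^ n ≤ A.preNorm (A.lam (A.convSq^[n] h) ξ) := by
  induction n with
  | zero => simp
  | succ n ih =>
    have hsq := A.preNorm_lam_sq_le (A.convSq^[n] h) ξ
    rw [A.convStar_iterate_convSq hh] at hsq
    rw [pow_succ, pow_mul, Function.iterate_succ_apply']
    calc _ ≤ A.preNorm (A.lam (A.convSq^[n] h) ξ) ^ 2 :=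
          pow_le_pow_left₀ (pow_nonneg (A.preNorm_nonneg _) _) ih 2
      _ ≤ _ := hsq.trans (mul_le_of_le_one_left (A.preNorm_nonneg _) hξ)

end Squaring

section Translation

variable {x y w w' : 𝒢}

noncomputable def translate (u : w ⟶ w') (ξ : A.PreL2 w' x) : A.PreL2 w x :=
  mapDomain (u ≫ ·) (mapRange (A.act (Groupoid.inv u)) (map_zero _) ξ)

theorem translate_single (u : w ⟶ w') (h : w' ⟶ x) (b : A.fiber w') :
    A.translate u (single h b) = single (u ≫ h) (A.act (Groupoid.inv u) b) := by
  rw [translate, mapRange_single, mapDomain_single]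

theorem translate_add (u : w ⟶ w') (ξ ζ : A.PreL2 w' x) :
    A.translate u (ξ + ζ) = A.translate u ξ + A.translate u ζ := by
  rw [translate, mapRange_add (map_add _), mapDomain_add]; rfl

theorem preNorm_translate (u : w ⟶ w') (ξ : A.PreL2 w' x) :
    A.preNorm (A.translate u ξ) = A.preNorm ξ := by
  rw [preNorm_eq_sqrt_norm_cstarInner, translate,
    cstarInner_mapDomain_self fun _ _ => (cancel_epi u).mp, cstarInner_mapRange_self,
    StarAlgEquiv.norm_map]
  rfl

theorem lam_translate (u : w ⟶ w') (f : A.Conv x y) (ξ : A.PreL2 w' x) :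
    A.lam f (A.translate u ξ) = A.translate u (A.lam f ξ) := by
  induction f using Finsupp.induction_linear with
  | zero => simp [translate]
  | add p q hp hq => rw [lam_add_left, lam_add_left, hp, hq, translate_add]
  | single g a =>
    induction ξ using Finsupp.induction_linear with
    | zero => simp [translate]
    | add p q hp hq => rw [translate_add, lam_add_right, lam_add_right, hp, hq, translate_add]
    | single h b =>
      have hinv : Groupoid.inv (u ≫ h ≫ g) = Groupoid.inv (h ≫ g) ≫ Groupoid.inv u := by
        simp [Groupoid.inv_eq_inv]
      rw [translate_single, lam_single_single, lam_single_single, translate_single,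
        Category.assoc, map_mul, act_act, hinv]

theorem opNorm_le_opNorm_of_hom (u : w ⟶ w') (f : A.Conv x y) : A.opNorm f w' ≤ A.opNorm f w :=
  A.opNorm_le fun ξ hξ => by
    rw [← A.preNorm_translate u, ← lam_translate]
    exact A.preNorm_lam_le_opNorm_of_preNorm_le_one f ((A.preNorm_translate u ξ).trans_le hξ)

theorem redNorm_eq_opNorm (f : A.Conv x y) : A.redNorm f = A.opNorm f x := by
  have hle : ∀ z, A.opNorm f z ≤ A.opNorm f x := fun z => by
    rcases isEmpty_or_nonempty (z ⟶ x) with hz | ⟨⟨e⟩⟩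
    · refine A.opNorm_le fun ξ _ => ?_
      rw [show ξ = 0 from Finsupp.ext isEmptyElim, lam_zero_right, preNorm_zero]
      exact A.opNorm_nonneg f x
    · exact A.opNorm_le_opNorm_of_hom (Groupoid.inv e) f
  have : Nonempty 𝒢 := ⟨x⟩
  exact le_antisymm (ciSup_le hle) (le_ciSup ⟨_, Set.forall_mem_range.mpr hle⟩ x)

end Translation

section Restriction

variable {ℋ : Type u} [Groupoid ℋ] (φ : ℋ ⥤ 𝒢) {x y z : ℋ}

/- `(A.restrict φ).fiber y` is `A.fiber (φ.obj y)` only after unfolding `restrict`, hence the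
explicit `@single` on the right-hand sides below and the `erw`s. -/

@[simp] theorem mapFaithful_zero : A.mapFaithful φ (0 : (A.restrict φ).Conv x y) = 0 :=
  mapDomain_zero

theorem mapFaithful_single (g : x ⟶ y) (a : (A.restrict φ).fiber y) :
    A.mapFaithful φ (single g a) = @single _ (A.fiber (φ.obj y)) _ (φ.map g) a :=
  mapDomain_single

theorem mapFaithful_add (f f' : (A.restrict φ).Conv x y) :
    A.mapFaithful φ (f + f') = A.mapFaithful φ f + A.mapFaithful φ f' :=
  mapDomain_add

theorem mapFaithful_convStar (f : (A.restrict φ).Conv x y) :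
    A.mapFaithful φ ((A.restrict φ).convStar f) = A.convStar (A.mapFaithful φ f) := by
  induction f using Finsupp.induction_linear with
  | zero => simp
  | add p q hp hq => rw [convStar_add, mapFaithful_add, mapFaithful_add, convStar_add, hp, hq]
  | single g a =>
    rw [convStar_single, mapFaithful_single, mapFaithful_single]
    erw [convStar_single]
    simp only [restrict_act, Groupoid.inv_eq_inv, Functor.map_inv]
    rfl

theorem mapFaithful_convMul {w : ℋ} (f₂ : (A.restrict φ).Conv y w)
    (f₁ : (A.restrict φ).Conv x y) :
    A.mapFaithful φ ((A.restrict φ).convMul f₂ f₁)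
      = A.convMul (A.mapFaithful φ f₂) (A.mapFaithful φ f₁) := by
  induction f₂ using Finsupp.induction_linear with
  | zero => simp
  | add p q hp hq =>
    rw [convMul_add_left, mapFaithful_add, mapFaithful_add, convMul_add_left, hp, hq]
  | single g₂ a₂ =>
    induction f₁ using Finsupp.induction_linear with
    | zero => simp
    | add p q hp hq =>
      rw [convMul_add_right, mapFaithful_add, mapFaithful_add, convMul_add_right, hp, hq]
    | single g₁ a₁ =>
      rw [convMul_single_single, mapFaithful_single, mapFaithful_single, mapFaithful_single]
      erw [convMul_single_single]
      simp only [restrict_act, φ.map_comp]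
      rfl

theorem mapFaithful_iterate_convSq (h : (A.restrict φ).Conv x x) (n : ℕ) :
    A.mapFaithful φ ((A.restrict φ).convSq^[n] h) = A.convSq^[n] (A.mapFaithful φ h) :=
  Function.Semiconj.iterate_right (fun h => A.mapFaithful_convMul φ h h) n h

noncomputable def mapPreL2 (η : (A.restrict φ).PreL2 z x) : A.PreL2 (φ.obj z) (φ.obj x) :=
  mapDomain (fun g => φ.map g) η

@[simp] theorem mapPreL2_zero : A.mapPreL2 φ (0 : (A.restrict φ).PreL2 z x) = 0 :=
  mapDomain_zero

theorem mapPreL2_single (h : z ⟶ x) (b : (A.restrict φ).fiber z) :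
    A.mapPreL2 φ (single h b) = @single _ (A.fiber (φ.obj z)) _ (φ.map h) b :=
  mapDomain_single

theorem mapPreL2_add (η η' : (A.restrict φ).PreL2 z x) :
    A.mapPreL2 φ (η + η') = A.mapPreL2 φ η + A.mapPreL2 φ η' :=
  mapDomain_add

theorem lam_mapFaithful_mapPreL2 (f : (A.restrict φ).Conv x y)
    (η : (A.restrict φ).PreL2 z x) :
    A.lam (A.mapFaithful φ f) (A.mapPreL2 φ η) = A.mapPreL2 φ ((A.restrict φ).lam f η) := by
  induction f using Finsupp.induction_linear with
  | zero => simp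
  | add p q hp hq => rw [lam_add_left, mapFaithful_add, lam_add_left, hp, hq, mapPreL2_add]
  | single g a =>
    induction η using Finsupp.induction_linear with
    | zero => simp
    | add p q hp hq => rw [mapPreL2_add, lam_add_right, lam_add_right, hp, hq, mapPreL2_add]
    | single h b =>
      rw [mapPreL2_single, mapFaithful_single, lam_single_single, mapPreL2_single]
      erw [lam_single_single]
      simp only [restrict_act, Groupoid.inv_eq_inv, Functor.map_inv, φ.map_comp]
      rfl

theorem preNorm_mapPreL2 (hφ : φ.Faithful) (η : (A.restrict φ).PreL2 z x) :
    A.preNorm (A.mapPreL2 φ η) = (A.restrict φ).preNorm η :=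
  congrArg (√‖·‖) (cstarInner_mapDomain_self (fun _ _ h => hφ.map_injective h) η)

end Restriction

section Isometry

variable {ℋ : Type u} [Groupoid ℋ] (φ : ℋ ⥤ 𝒢) {x y z : ℋ}

theorem opNorm_le_opNorm_mapFaithful (hφ : φ.Faithful) (f : (A.restrict φ).Conv x y) (z : ℋ) :
    (A.restrict φ).opNorm f z ≤ A.opNorm (A.mapFaithful φ f) (φ.obj z) :=
  (A.restrict φ).opNorm_le fun η hη => by
    rw [← A.preNorm_mapPreL2 φ hφ, ← lam_mapFaithful_mapPreL2]
    exact A.preNorm_lam_le_opNorm_of_preNorm_le_one _ ((A.preNorm_mapPreL2 φ hφ η).trans_le hη)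

theorem preNorm_lam_mapFaithful_single_le (hφ : φ.Faithful) (e : z ⟶ x)
    (f : (A.restrict φ).Conv x y) (h : φ.obj z ⟶ φ.obj x) (b : A.fiber (φ.obj z)) :
    A.preNorm (A.lam (A.mapFaithful φ f) (single h b)) ≤ (A.restrict φ).opNorm f z * ‖b‖ := by
  let u := h ≫ Groupoid.inv (φ.map e)
  let b' : (A.restrict φ).fiber z := A.act u b
  have hsingle : single h b = A.translate u (A.mapPreL2 φ (single e b')) := by
    rw [mapPreL2_single, translate_single]
    simp [u, Groupoid.inv_eq_inv]
  rw [hsingle, lam_translate, preNorm_translate, lam_mapFaithful_mapPreL2,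
    preNorm_mapPreL2 _ _ hφ]
  calc _ ≤ (A.restrict φ).opNorm f z * (A.restrict φ).preNorm (single e b') :=
        (A.restrict φ).preNorm_lam_le_opNorm f _
    _ = _ := by rw [preNorm_single]; exact congrArg _ (StarAlgEquiv.norm_map _ b)

theorem preNorm_lam_mapFaithful_le (hφ : φ.Faithful) (e : z ⟶ x) (f : (A.restrict φ).Conv x y)
    (ξ : A.PreL2 (φ.obj z) (φ.obj x)) :
    A.preNorm (A.lam (A.mapFaithful φ f) ξ)
      ≤ (A.restrict φ).opNorm f z * ξ.sum fun _ b => ‖b‖ := by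
  rw [lam_eq_sum_lam_single_right, Finsupp.sum, Finsupp.sum, Finset.mul_sum]
  exact (A.preNorm_sum_le _ _).trans
    (Finset.sum_le_sum fun h _ => A.preNorm_lam_mapFaithful_single_le φ hφ e f h _)

theorem opNorm_mapFaithful_le_of_convStar_eq (hφ : φ.Faithful) (e : z ⟶ x)
    {h : (A.restrict φ).Conv x x} (hh : (A.restrict φ).convStar h = h) :
    A.opNorm (A.mapFaithful φ h) (φ.obj z) ≤ (A.restrict φ).opNorm h z := by
  have hh' : A.convStar (A.mapFaithful φ h) = A.mapFaithful φ h := by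
    rw [← mapFaithful_convStar, hh]
  refine A.opNorm_le fun ξ hξ =>
    le_of_forall_pow_two_pow_le_mul (C := ξ.sum fun _ b => ‖b‖)
      ((A.restrict φ).opNorm_nonneg h z) fun n => ?_
  have hξ₁ : 0 ≤ ξ.sum fun _ b => ‖b‖ := Finset.sum_nonneg fun _ _ => norm_nonneg _
  calc A.preNorm (A.lam (A.mapFaithful φ h) ξ) ^ 2 ^ n
      ≤ A.preNorm (A.lam (A.convSq^[n] (A.mapFaithful φ h)) ξ) :=
        A.preNorm_lam_pow_le_lam_iterate_convSq hh' hξ n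
    _ ≤ (A.restrict φ).opNorm ((A.restrict φ).convSq^[n] h) z * ξ.sum fun _ b => ‖b‖ := by
        rw [← mapFaithful_iterate_convSq]
        exact A.preNorm_lam_mapFaithful_le φ hφ e _ ξ
    _ ≤ (A.restrict φ).opNorm h z ^ 2 ^ n * ξ.sum fun _ b => ‖b‖ :=
        mul_le_mul_of_nonneg_right ((A.restrict φ).opNorm_iterate_convSq_le h z n) hξ₁

theorem opNorm_mapFaithful_le (hφ : φ.Faithful) (e : z ⟶ x) (f : (A.restrict φ).Conv x y) :
    A.opNorm (A.mapFaithful φ f) (φ.obj z) ≤ (A.restrict φ).opNorm f z := by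
  let H := A.restrict φ
  refine (pow_le_pow_iff_left₀ (A.opNorm_nonneg _ _) (H.opNorm_nonneg _ _) two_ne_zero).mp ?_
  calc A.opNorm (A.mapFaithful φ f) (φ.obj z) ^ 2
      = A.opNorm (A.mapFaithful φ (H.convMul (H.convStar f) f)) (φ.obj z) := by
        rw [mapFaithful_convMul, mapFaithful_convStar, opNorm_convStar_mul_self]
    _ ≤ H.opNorm (H.convMul (H.convStar f) f) z :=
        A.opNorm_mapFaithful_le_of_convStar_eq φ hφ e (by rw [convStar_convMul, convStar_convStar])
    _ = H.opNorm f z ^ 2 := H.opNorm_convStar_mul_self f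

theorem opNorm_mapFaithful (hφ : φ.Faithful) (e : z ⟶ x) (f : (A.restrict φ).Conv x y) :
    (A.restrict φ).opNorm f z = A.opNorm (A.mapFaithful φ f) (φ.obj z) :=
  le_antisymm (A.opNorm_le_opNorm_mapFaithful φ hφ f z) (A.opNorm_mapFaithful_le φ hφ e f)

end Isometry

end GCStarAlg

/-- Let `𝒢` be a groupoid, `A` a `𝒢`-C*-algebra and `φ : ℋ → 𝒢` a faithful
groupoid morphism; regard `A` as an `ℋ`-C*-algebra by precomposition with `φ`.  Then the
natural *-functor `id_A φ : Aℋ → A𝒢` (given by `x ↦ φ(x)` on objects and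
`a u_g ↦ a u_{φ(g)}` on morphisms) is a *-functor which is isometric for the reduced norms,
and hence extends to an isometric C*-functor `id_A ⋊_r φ : A ⋊_r ℋ → A ⋊_r 𝒢`.  In
particular, for all objects `x, y, z` of `ℋ` with `ℋ(z,x)` nonempty and all
`f ∈ Aℋ(x,y)`, one has `‖Λ_{A,ℋ,z}(f)‖ = ‖Λ_{A,𝒢,φ(z)}((id_A φ)(f))‖`. -/
theorem GCStarAlg.mapFaithful_isometric {ℋ 𝒢 : Type u} [Groupoid ℋ] [Groupoid 𝒢]
    (A : GCStarAlg 𝒢) (φ : ℋ ⥤ 𝒢) (hφ : φ.Faithful) :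
    (∀ {x y : ℋ} (f : (A.restrict φ).Conv x y),
      A.mapFaithful φ ((A.restrict φ).convStar f) = A.convStar (A.mapFaithful φ f)) ∧
    (∀ {x y z : ℋ} (f₂ : (A.restrict φ).Conv y z) (f₁ : (A.restrict φ).Conv x y),
      A.mapFaithful φ ((A.restrict φ).convMul f₂ f₁)
        = A.convMul (A.mapFaithful φ f₂) (A.mapFaithful φ f₁)) ∧
    (∀ (x y z : ℋ), Nonempty (z ⟶ x) → ∀ f : (A.restrict φ).Conv x y,
      (A.restrict φ).opNorm f z = A.opNorm (A.mapFaithful φ f) (φ.obj z)) ∧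
    (∀ {x y : ℋ} (f : (A.restrict φ).Conv x y),
      (A.restrict φ).redNorm f = A.redNorm (A.mapFaithful φ f)) := by
  refine ⟨A.mapFaithful_convStar φ, A.mapFaithful_convMul φ,
    fun x y z ⟨e⟩ f => A.opNorm_mapFaithful φ hφ e f, fun {x y} f => ?_⟩
  rw [redNorm_eq_opNorm, redNorm_eq_opNorm, A.opNorm_mapFaithful φ hφ (𝟙 x)]
end

section
/- Let 𝒜 be a C*-category, B a C*-algebra, and F: 𝒜 → B a C*-functor satisfying F(f)F(g) = 0 whenever f and g are non-composable morphisms of 𝒜. Suppose F is isometric on each morphism set and the induced *-homomorphism C*₀F: C*₀𝒜 → B is injective. Then the induced *-homomorphism C*F: C*𝒜 → B is isometric. -/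
universe u v

/-- A (possibly nonunital) C*-category: a small category whose morphism sets are complex
Banach spaces equipped with conjugate-linear involutions `* : 𝒜(x,y) → 𝒜(y,x)` satisfying
`(a*)* = a`, `‖ab‖ ≤ ‖a‖ ‖b‖`, `‖a* a‖ = ‖a‖²`, `(ab)* = b* a*` and `a* a ≥ 0` (the last
axiom expressed by `a* a` being of the form `b* b` for an endomorphism `b`).  Identity
morphisms are not required. -/
structure CStarCategory where
  Obj : Type u
  Hom : Obj → Obj → Type v
  [nacg : ∀ x y, NormedAddCommGroup (Hom x y)]
  [nsp : ∀ x y, NormedSpace ℂ (Hom x y)]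
  [complete : ∀ x y, CompleteSpace (Hom x y)]
  /-- composition: `comp g f = g ∘ f` -/
  comp : ∀ {x y z : Obj}, Hom y z → Hom x y → Hom x z
  /-- the involution -/
  star : ∀ {x y : Obj}, Hom x y → Hom y x
  comp_assoc : ∀ {w x y z : Obj} (h : Hom y z) (g : Hom x y) (f : Hom w x),
    comp (comp h g) f = comp h (comp g f)
  add_comp : ∀ {x y z : Obj} (g g' : Hom y z) (f : Hom x y),
    comp (g + g') f = comp g f + comp g' f
  comp_add : ∀ {x y z : Obj} (g : Hom y z) (f f' : Hom x y),
    comp g (f + f') = comp g f + comp g f'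
  smul_comp : ∀ {x y z : Obj} (c : ℂ) (g : Hom y z) (f : Hom x y),
    comp (c • g) f = c • comp g f
  comp_smul : ∀ {x y z : Obj} (c : ℂ) (g : Hom y z) (f : Hom x y),
    comp g (c • f) = c • comp g f
  star_add : ∀ {x y : Obj} (f g : Hom x y), star (f + g) = star f + star g
  star_smul : ∀ {x y : Obj} (c : ℂ) (f : Hom x y),
    star (c • f) = (starRingEnd ℂ c) • star f
  star_star : ∀ {x y : Obj} (f : Hom x y), star (star f) = f
  star_comp : ∀ {x y z : Obj} (g : Hom y z) (f : Hom x y),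
    star (comp g f) = comp (star f) (star g)
  norm_comp_le : ∀ {x y z : Obj} (g : Hom y z) (f : Hom x y), ‖comp g f‖ ≤ ‖g‖ * ‖f‖
  norm_star_comp_self : ∀ {x y : Obj} (f : Hom x y), ‖comp (star f) f‖ = ‖f‖ ^ 2
  star_comp_self_nonneg : ∀ {x y : Obj} (f : Hom x y),
    ∃ b : Hom x x, comp (star f) f = comp (star b) b

namespace CStarCategory

attribute [instance] CStarCategory.nacg CStarCategory.nsp CStarCategory.complete

variable (𝒜 : CStarCategory)

/-- The underlying vector space of the *-algebra `C*₀𝒜 = ⊕_{x,y} 𝒜(x,y)`, as finitely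
supported dependent functions. -/
abbrev C0 : Type _ := Π₀ p : 𝒜.Obj × 𝒜.Obj, 𝒜.Hom p.1 p.2

open scoped Classical in
/-- The product of the *-algebra `C*₀𝒜`: for `f ∈ 𝒜(x,y)` and `g ∈ 𝒜(z,w)`,
`f · g := f ∘ g` if the morphisms are composable (`w = x`) and `0` otherwise. -/
noncomputable def c0Mul (a b : 𝒜.C0) : 𝒜.C0 :=
  DFinsupp.sum a fun p f => DFinsupp.sum b fun q g =>
    if h : q.2 = p.1 then DFinsupp.single (q.1, p.2) (𝒜.comp f (h ▸ g)) else 0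

open scoped Classical in
/-- The involution of the *-algebra `C*₀𝒜`, inherited from `𝒜`. -/
noncomputable def c0Star (a : 𝒜.C0) : 𝒜.C0 :=
  DFinsupp.sum a fun p f => DFinsupp.single (p.2, p.1) (𝒜.star f)

open scoped Classical in
/-- The inclusion of the morphism set `𝒜(x,y)` into `C*₀𝒜`. -/
noncomputable def ofHom (x y : 𝒜.Obj) (f : 𝒜.Hom x y) : 𝒜.C0 :=
  DFinsupp.single (x, y) f

/-- A C*-seminorm on the *-algebra `C*₀𝒜`: a submultiplicative seminorm `ρ` with
`ρ(a* a) = ρ(a)²`. -/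
structure IsCStarSeminorm (ρ : 𝒜.C0 → ℝ) : Prop where
  nonneg : ∀ a, 0 ≤ ρ a
  add_le : ∀ a b, ρ (a + b) ≤ ρ a + ρ b
  smul_eq : ∀ (c : ℂ) (a), ρ (c • a) = ‖c‖ * ρ a
  mul_le : ∀ a b, ρ (𝒜.c0Mul a b) ≤ ρ a * ρ b
  cstar : ∀ a, ρ (𝒜.c0Mul (𝒜.c0Star a) a) = ρ a ^ 2

end CStarCategory

namespace CStarCategory

variable (𝒜 : CStarCategory)

/-- A C*-functor `F : 𝒜 → B` from a C*-category to a C*-algebra `B` (viewed as a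
one-object C*-category): linear on morphism sets, involution- and
composition-preserving. -/
structure IsCStarFunctorTo {B : Type*} [NonUnitalCStarAlgebra B]
    (F : ∀ {x y : 𝒜.Obj}, 𝒜.Hom x y → B) : Prop where
  map_add : ∀ {x y : 𝒜.Obj} (f g : 𝒜.Hom x y), F (f + g) = F f + F g
  map_smul : ∀ {x y : 𝒜.Obj} (c : ℂ) (f : 𝒜.Hom x y), F (c • f) = c • F f
  map_star : ∀ {x y : 𝒜.Obj} (f : 𝒜.Hom x y), F (𝒜.star f) = Star.star (F f)
  map_comp : ∀ {x y z : 𝒜.Obj} (g : 𝒜.Hom y z) (f : 𝒜.Hom x y),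
    F (𝒜.comp g f) = F g * F f

open scoped Classical in
/-- The *-homomorphism `C*₀F : C*₀𝒜 → B` induced by a C*-functor `F : 𝒜 → B` which kills
products of non-composable morphisms. -/
noncomputable def c0Map {B : Type*} [NonUnitalCStarAlgebra B]
    (F : ∀ {x y : 𝒜.Obj}, 𝒜.Hom x y → B) (a : 𝒜.C0) : B :=
  DFinsupp.sum a fun _ f => F f

/-- The norm of the enveloping C*-algebra `C*𝒜` on the dense *-subalgebra `C*₀𝒜`:
the supremum of all C*-seminorms on `C*₀𝒜` (which is finite). -/
noncomputable def envNorm (a : 𝒜.C0) : ℝ :=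
  sSup {r : ℝ | ∃ ρ : 𝒜.C0 → ℝ, 𝒜.IsCStarSeminorm ρ ∧ r = ρ a}

end CStarCategory

/-!
A C*-seminorm `ρ` on `C*₀𝒜`, transported along the injective map `C*₀F`, becomes a C*-seminorm
on the image of `C*₀F`. On a C*-algebra every C*-seminorm is dominated by the norm: a self-adjoint
contraction `x` is the real part of a unitary `u` of the unitization, left multiplication by `u`
preserves `ρ` because of the C*-identity, so `ρ (x b) ≤ ρ b`, and then
`ρ(a)⁴ = ρ((a*a)²) ≤ ‖a*a‖ ρ(a*a) = ‖a‖² ρ(a)²`.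

The image is not closed, but the image of `C*₀𝒜'` for the full subcategory `𝒜'` on the finitely
many objects met by a given `a` is: since `F` kills non-composable products, cutting an element
down to the morphisms with a fixed source or target does not increase the norm of its image,
so every entry of `a` is bounded by `‖C*₀F(a)‖`, and the image is that of a finite product of
Banach spaces under a map bounded below. Conversely `a ↦ ‖C*₀F(a)‖` is itself a C*-seminorm,
hence the largest one.
-/

section CStarSeminorm

variable {A : Type*} [NonUnitalCStarAlgebra A]

lemma Unitization.inr_snd_mul_inr (u : Unitization ℂ A) (b : A) :
    (((u * b).snd : A) : Unitization ℂ A) = u * b :=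
  Unitization.ext (by simp) rfl

variable (ρ : Seminorm ℂ A) (hρ : ∀ a, ρ (star a * a) = ρ a ^ 2)
include hρ

lemma Seminorm.apply_unitary_mul_snd {u : Unitization ℂ A}
    (hu : u ∈ unitary (Unitization ℂ A)) (b : A) : ρ (u * b).snd = ρ b := by
  have hstar : star (u * b).snd * (u * b).snd = star b * b := by
    apply Unitization.inr_injective (R := ℂ)
    rw [Unitization.inr_mul, Unitization.inr_star, Unitization.inr_snd_mul_inr, star_mul,
      mul_assoc, ← mul_assoc (star u), Unitary.star_mul_self_of_mem hu, one_mul,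
      Unitization.inr_mul, Unitization.inr_star]
  rw [← sq_eq_sq₀ (apply_nonneg ρ _) (apply_nonneg ρ _), ← hρ, ← hρ, hstar]

lemma Seminorm.apply_mul_le_of_isSelfAdjoint_of_norm_le_one {x : A} (hx : IsSelfAdjoint x)
    (hx₁ : ‖x‖ ≤ 1) (b : A) : ρ (x * b) ≤ ρ b := by
  let _ := CStarAlgebra.spectralOrder (Unitization ℂ A)
  let _ := CStarAlgebra.spectralOrderedRing (Unitization ℂ A)
  obtain ⟨u, hu, hxu⟩ : ∃ u ∈ unitary (Unitization ℂ A),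
      (x : Unitization ℂ A) = (2⁻¹ : ℝ) • (u + star u) := by
    have hx₁' : ‖(⟨x, hx.inr ℂ⟩ : selfAdjoint (Unitization ℂ A))‖ ≤ 1 :=
      (Unitization.norm_inr x).trans_le hx₁
    refine ⟨_, (selfAdjoint.unitarySelfAddISMul _ hx₁').2, ?_⟩
    rw [← realPart_apply_coe, selfAdjoint.realPart_unitarySelfAddISMul]
  have hxb : x * b = (2⁻¹ : ℝ) • ((u * b).snd + (star u * b).snd) := by
    have := congrArg (fun v => (v * (b : Unitization ℂ A)).snd) hxu
    simpa only [← Unitization.inr_mul, Unitization.snd_inr, smul_mul_assoc, add_mul,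
      Unitization.snd_smul, Unitization.snd_add] using this
  calc ρ (x * b) ≤ 2⁻¹ * (ρ (u * b).snd + ρ (star u * b).snd) := by
        rw [hxb, ← Complex.coe_smul, map_smul_eq_mul, Complex.norm_real,
          Real.norm_of_nonneg (by norm_num)]
        gcongr
        exact map_add_le_add ρ _ _
    _ = ρ b := by
        rw [ρ.apply_unitary_mul_snd hρ hu, ρ.apply_unitary_mul_snd hρ (Unitary.star_mem hu)]
        ring

lemma Seminorm.apply_mul_le_norm_mul_of_isSelfAdjoint {x : A} (hx : IsSelfAdjoint x) (b : A) :
    ρ (x * b) ≤ ‖x‖ * ρ b := by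
  rcases eq_or_ne x 0 with rfl | hx₀
  · simp
  have hpos : 0 < ‖x‖ := norm_pos_iff.mpr hx₀
  have key := ρ.apply_mul_le_of_isSelfAdjoint_of_norm_le_one hρ
    ((IsSelfAdjoint.all ‖x‖⁻¹).smul hx) (by simp [norm_smul, hpos.ne']) b
  rwa [smul_mul_assoc, ← Complex.coe_smul, map_smul_eq_mul, Complex.norm_real,
    Real.norm_of_nonneg (by positivity), inv_mul_le_iff₀ hpos] at key

theorem Seminorm.le_norm_of_cstar (a : A) : ρ a ≤ ‖a‖ := by
  set h := star a * a
  have hh : IsSelfAdjoint h := .star_mul_self a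
  have hρh : ρ h ≤ ‖h‖ := by
    have hmul := ρ.apply_mul_le_norm_mul_of_isSelfAdjoint hρ hh h
    have hsq : ρ (h * h) = ρ h ^ 2 := by simpa only [hh.star_eq] using hρ h
    rw [hsq] at hmul
    nlinarith [apply_nonneg ρ h, norm_nonneg h]
  rw [hρ, CStarRing.norm_star_mul_self, ← sq] at hρh
  exact (sq_le_sq₀ (apply_nonneg ρ a) (norm_nonneg a)).1 hρh

end CStarSeminorm

section OrthogonalSum

variable {B : Type*} [NonUnitalCStarAlgebra B]

lemma norm_le_norm_add_of_mul_star_eq_zero {y z : B} (h : y * star z = 0) :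
    ‖y‖ ≤ ‖y + z‖ := by
  let _ := CStarAlgebra.spectralOrder B
  let _ := CStarAlgebra.spectralOrderedRing B
  have h' : z * star y = 0 := by simpa using congrArg star h
  have hsum : (y + z) * star (y + z) = y * star y + z * star z := by
    simp only [star_add, add_mul, mul_add, h, h', add_zero, zero_add]
  have hle : ‖y * star y‖ ≤ ‖(y + z) * star (y + z)‖ :=
    CStarAlgebra.norm_le_norm_of_nonneg_of_le (mul_star_self_nonneg y)
      (hsum ▸ le_add_of_nonneg_right (mul_star_self_nonneg z))
  rw [CStarRing.norm_self_mul_star, CStarRing.norm_self_mul_star] at hle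
  exact (mul_self_le_mul_self_iff (norm_nonneg _) (norm_nonneg _)).mpr hle

lemma norm_le_norm_add_of_star_mul_eq_zero {y z : B} (h : star y * z = 0) :
    ‖y‖ ≤ ‖y + z‖ := by
  simpa [← star_add] using
    norm_le_norm_add_of_mul_star_eq_zero (y := star y) (z := star z) (by simpa using h)

end OrthogonalSum

namespace CStarCategory

open scoped Classical

variable {𝒜 : CStarCategory}

/-- The elements of `C*₀𝒜'`, for `𝒜'` the full subcategory on the objects `T`. -/
def supportedOn (T : Finset 𝒜.Obj) : Submodule ℂ 𝒜.C0 where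
  carrier := {a | a.support ⊆ T ×ˢ T}
  add_mem' ha hb := DFinsupp.support_add.trans (Finset.union_subset ha hb)
  zero_mem' := by simp
  smul_mem' c a ha := (DFinsupp.support_smul c a).trans ha

lemma self_mem_supportedOn (a : 𝒜.C0) :
    a ∈ supportedOn (a.support.image Prod.fst ∪ a.support.image Prod.snd) := fun _ hp =>
  Finset.mem_product.mpr ⟨Finset.mem_union_left _ (Finset.mem_image_of_mem _ hp),
    Finset.mem_union_right _ (Finset.mem_image_of_mem _ hp)⟩

lemma c0Star_mem_supportedOn {T : Finset 𝒜.Obj} {a : 𝒜.C0} (ha : a ∈ supportedOn T) :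
    𝒜.c0Star a ∈ supportedOn T := by
  refine DFinsupp.support_sum.trans (Finset.biUnion_subset.mpr fun _ hp => ?_)
  refine DFinsupp.support_single_subset.trans (Finset.singleton_subset_iff.mpr ?_)
  obtain ⟨h₁, h₂⟩ := Finset.mem_product.mp (ha hp)
  exact Finset.mem_product.mpr ⟨h₂, h₁⟩

lemma c0Mul_mem_supportedOn {T : Finset 𝒜.Obj} {a b : 𝒜.C0} (ha : a ∈ supportedOn T)
    (hb : b ∈ supportedOn T) : 𝒜.c0Mul a b ∈ supportedOn T := by
  refine DFinsupp.support_sum.trans (Finset.biUnion_subset.mpr fun p hp => ?_)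
  refine DFinsupp.support_sum.trans (Finset.biUnion_subset.mpr fun q hq => ?_)
  dsimp only
  split_ifs
  · refine DFinsupp.support_single_subset.trans (Finset.singleton_subset_iff.mpr ?_)
    exact Finset.mem_product.mpr
      ⟨(Finset.mem_product.mp (hb hq)).1, (Finset.mem_product.mp (ha hp)).2⟩
  · simp

variable {B : Type*} [NonUnitalCStarAlgebra B] {F : ∀ {x y : 𝒜.Obj}, 𝒜.Hom x y → B}

noncomputable def IsCStarSeminorm.toSeminorm {ρ : 𝒜.C0 → ℝ} (hρ : 𝒜.IsCStarSeminorm ρ) :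
    Seminorm ℂ 𝒜.C0 :=
  Seminorm.of ρ hρ.add_le hρ.smul_eq

section Functor

variable (hF : 𝒜.IsCStarFunctorTo F)
include hF

lemma IsCStarFunctorTo.map_zero {x y : 𝒜.Obj} : F (0 : 𝒜.Hom x y) = 0 := by
  simpa using hF.map_smul 0 0

lemma c0Map_eq_sum {a : 𝒜.C0} {s : Finset (𝒜.Obj × 𝒜.Obj)} (hs : a.support ⊆ s) :
    𝒜.c0Map F a = ∑ p ∈ s, F (a p) :=
  DFinsupp.sum_of_support_subset hs fun _ _ => hF.map_zero

lemma c0Map_single (p : 𝒜.Obj × 𝒜.Obj) (f : 𝒜.Hom p.1 p.2) :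
    𝒜.c0Map F (DFinsupp.single p f) = F f :=
  DFinsupp.sum_single_index hF.map_zero

noncomputable def IsCStarFunctorTo.c0MapLinear : 𝒜.C0 →ₗ[ℂ] B where
  toFun := 𝒜.c0Map F
  map_add' _ _ := DFinsupp.sum_add_index (fun _ => hF.map_zero) fun _ => hF.map_add
  map_smul' c a := by
    rw [c0Map_eq_sum hF (DFinsupp.support_smul c a), c0Map_eq_sum hF subset_rfl,
      RingHom.id_apply, Finset.smul_sum]
    exact Finset.sum_congr rfl fun p _ => hF.map_smul c (a p)

lemma IsCStarFunctorTo.c0MapLinear_apply (a : 𝒜.C0) : hF.c0MapLinear a = 𝒜.c0Map F a :=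
  rfl

lemma c0Map_star (a : 𝒜.C0) : 𝒜.c0Map F (𝒜.c0Star a) = Star.star (𝒜.c0Map F a) := by
  rw [c0Star, ← hF.c0MapLinear_apply, map_dfinsuppSum, c0Map_eq_sum hF subset_rfl, star_sum]
  exact Finset.sum_congr rfl fun p _ => (c0Map_single hF _ _).trans (hF.map_star _)

lemma norm_c0Map_le_sum (hiso : ∀ {x y : 𝒜.Obj} (f : 𝒜.Hom x y), ‖F f‖ = ‖f‖) {a : 𝒜.C0}
    {s : Finset (𝒜.Obj × 𝒜.Obj)} (hs : a.support ⊆ s) : ‖𝒜.c0Map F a‖ ≤ ∑ p ∈ s, ‖a p‖ := by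
  rw [c0Map_eq_sum hF hs]
  exact (norm_sum_le _ _).trans_eq (Finset.sum_congr rfl fun p _ => hiso _)

variable (horth : ∀ {x y z w : 𝒜.Obj} (f : 𝒜.Hom y z) (g : 𝒜.Hom x w), w ≠ y → F f * F g = 0)
include horth

lemma c0Map_mul (a b : 𝒜.C0) :
    𝒜.c0Map F (𝒜.c0Mul a b) = 𝒜.c0Map F a * 𝒜.c0Map F b := by
  have hterm {p q : 𝒜.Obj × 𝒜.Obj} (f : 𝒜.Hom p.1 p.2) (g : 𝒜.Hom q.1 q.2) :
      𝒜.c0Map F (if h : q.2 = p.1 then DFinsupp.single (q.1, p.2) (𝒜.comp f (h ▸ g)) else 0) =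
        F f * F g := by
    obtain ⟨q₁, q₂⟩ := q
    dsimp only
    split_ifs with h
    · subst h
      rw [c0Map_single hF, hF.map_comp]
    · rw [← hF.c0MapLinear_apply, map_zero, horth f g h]
  rw [c0Mul, ← hF.c0MapLinear_apply, map_dfinsuppSum, c0Map_eq_sum hF subset_rfl,
    c0Map_eq_sum hF subset_rfl, Finset.sum_mul_sum]
  refine Finset.sum_congr rfl fun p _ => ?_
  dsimp only
  rw [map_dfinsuppSum]
  exact Finset.sum_congr rfl fun q _ => hterm _ _

lemma isCStarSeminorm_norm_c0Map : 𝒜.IsCStarSeminorm fun a => ‖𝒜.c0Map F a‖ where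
  nonneg _ := norm_nonneg _
  add_le a b := by
    rw [← hF.c0MapLinear_apply, map_add]
    exact norm_add_le _ _
  smul_eq c a := by rw [← hF.c0MapLinear_apply, map_smul, norm_smul]; rfl
  mul_le a b := by rw [c0Map_mul hF horth]; exact norm_mul_le _ _
  cstar a := by rw [c0Map_mul hF horth, c0Map_star hF, CStarRing.norm_star_mul_self, sq]

lemma c0Map_mul_star_c0Map_eq_zero {a b : 𝒜.C0}
    (h : ∀ p ∈ a.support, ∀ q ∈ b.support, q.1 ≠ p.1) :
    𝒜.c0Map F a * Star.star (𝒜.c0Map F b) = 0 := by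
  rw [c0Map_eq_sum hF subset_rfl, c0Map_eq_sum hF subset_rfl, star_sum, Finset.sum_mul_sum]
  refine Finset.sum_eq_zero fun p hp => Finset.sum_eq_zero fun q hq => ?_
  rw [← hF.map_star]
  exact horth _ _ (h p hp q hq)

lemma star_c0Map_mul_c0Map_eq_zero {a b : 𝒜.C0}
    (h : ∀ p ∈ a.support, ∀ q ∈ b.support, q.2 ≠ p.2) :
    Star.star (𝒜.c0Map F a) * 𝒜.c0Map F b = 0 := by
  rw [c0Map_eq_sum hF subset_rfl, c0Map_eq_sum hF subset_rfl, star_sum, Finset.sum_mul_sum]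
  refine Finset.sum_eq_zero fun p hp => Finset.sum_eq_zero fun q hq => ?_
  rw [← hF.map_star]
  exact horth _ _ (h p hp q hq)

lemma norm_c0Map_filter_fst_le (P : 𝒜.Obj → Prop) (a : 𝒜.C0) :
    ‖𝒜.c0Map F (a.filter fun p => P p.1)‖ ≤ ‖𝒜.c0Map F a‖ := by
  conv_rhs => rw [← a.filter_add_filter_not fun p => P p.1, ← hF.c0MapLinear_apply, map_add]
  refine norm_le_norm_add_of_mul_star_eq_zero (c0Map_mul_star_c0Map_eq_zero hF horth ?_)
  simp only [DFinsupp.support_filter, Finset.mem_filter]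
  exact fun p hp q hq hqp => hq.2 (hqp ▸ hp.2)

lemma norm_c0Map_filter_snd_le (P : 𝒜.Obj → Prop) (a : 𝒜.C0) :
    ‖𝒜.c0Map F (a.filter fun p => P p.2)‖ ≤ ‖𝒜.c0Map F a‖ := by
  conv_rhs => rw [← a.filter_add_filter_not fun p => P p.2, ← hF.c0MapLinear_apply, map_add]
  refine norm_le_norm_add_of_star_mul_eq_zero (star_c0Map_mul_c0Map_eq_zero hF horth ?_)
  simp only [DFinsupp.support_filter, Finset.mem_filter]
  exact fun p hp q hq hqp => hq.2 (hqp ▸ hp.2)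

noncomputable def c0MapSubalgebra (T : Finset 𝒜.Obj) : NonUnitalStarSubalgebra ℂ B where
  __ := (supportedOn T).map hF.c0MapLinear
  mul_mem' := by
    rintro _ _ ⟨a, ha, rfl⟩ ⟨b, hb, rfl⟩
    exact ⟨_, c0Mul_mem_supportedOn ha hb, c0Map_mul hF horth a b⟩
  star_mem' := by
    rintro _ ⟨a, ha, rfl⟩
    exact ⟨_, c0Star_mem_supportedOn ha, c0Map_star hF a⟩

variable (hiso : ∀ {x y : 𝒜.Obj} (f : 𝒜.Hom x y), ‖F f‖ = ‖f‖)
include hiso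

lemma norm_apply_le_norm_c0Map (a : 𝒜.C0) (p : 𝒜.Obj × 𝒜.Obj) : ‖a p‖ ≤ ‖𝒜.c0Map F a‖ := by
  have hsingle : DFinsupp.single p (a p) =
      (a.filter fun q => q.1 = p.1).filter fun q => q.2 = p.2 := by
    ext q
    by_cases hq : q = p
    · subst hq
      simp
    · simp only [DFinsupp.single_eq_of_ne hq, DFinsupp.filter_apply]
      split_ifs with h₂ h₁ <;> first | rfl | exact absurd (Prod.ext h₁ h₂) hq
  calc ‖a p‖ = ‖𝒜.c0Map F (DFinsupp.single p (a p))‖ := by rw [c0Map_single hF, hiso]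
    _ ≤ ‖𝒜.c0Map F (a.filter fun q => q.1 = p.1)‖ := by
      rw [hsingle]
      exact norm_c0Map_filter_snd_le hF horth (· = p.2) _
    _ ≤ ‖𝒜.c0Map F a‖ := norm_c0Map_filter_fst_le hF horth (· = p.1) a

lemma isClosed_c0MapSubalgebra (T : Finset 𝒜.Obj) :
    IsClosed (c0MapSubalgebra hF horth T : Set B) := by
  set s := T ×ˢ T
  -- `c0MapSubalgebra hF horth T` is the range of `L` on the Banach space `Π p ∈ s, 𝒜(p.1, p.2)`
  let L := hF.c0MapLinear ∘ₗ DFinsupp.lmk (R := ℂ) (M := fun p => 𝒜.Hom p.1 p.2) s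
  have hL : ∀ v, ‖L v‖ ≤ s.card * ‖v‖ := fun v => by
    set a : 𝒜.C0 := DFinsupp.mk s v with ha
    calc ‖L v‖ = ‖𝒜.c0Map F a‖ := rfl
      _ ≤ ∑ p ∈ s, ‖a p‖ := norm_c0Map_le_sum hF hiso DFinsupp.support_mk_subset
      _ ≤ ∑ _p ∈ s, ‖v‖ := Finset.sum_le_sum fun p hp => by
        rw [ha, DFinsupp.mk_of_mem hp]
        exact norm_le_pi_norm v _
      _ = s.card * ‖v‖ := by rw [Finset.sum_const, nsmul_eq_mul]
  let Lc := L.mkContinuous s.card hL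
  have hanti : AntilipschitzWith 1 Lc := Lc.antilipschitz_of_bound fun v => by
    rw [NNReal.coe_one, one_mul]
    refine (pi_norm_le_iff_of_nonneg (norm_nonneg _)).mpr fun i => ?_
    have hi := norm_apply_le_norm_c0Map hF horth hiso (DFinsupp.mk s v : 𝒜.C0) i
    rwa [DFinsupp.mk_of_mem i.2] at hi
  have hrange : Set.range Lc = c0MapSubalgebra hF horth T := by
    ext m
    constructor
    · rintro ⟨v, rfl⟩
      exact ⟨_, DFinsupp.support_mk_subset, rfl⟩
    · rintro ⟨a, ha, rfl⟩
      refine ⟨fun i => a i, congrArg (𝒜.c0Map F) ?_⟩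
      ext p
      rw [DFinsupp.lmk_apply, DFinsupp.mk_apply]
      split_ifs with hp
      · rfl
      · exact (DFinsupp.notMem_support_iff.mp fun h => hp (ha h)).symm
  rw [← hrange]
  exact hanti.isClosed_range Lc.uniformContinuous

lemma IsCStarSeminorm.le_norm_c0Map (hinj : Function.Injective (𝒜.c0Map F))
    {ρ : 𝒜.C0 → ℝ} (hρ : 𝒜.IsCStarSeminorm ρ) (a : 𝒜.C0) : ρ a ≤ ‖𝒜.c0Map F a‖ := by
  set M := c0MapSubalgebra hF horth (a.support.image Prod.fst ∪ a.support.image Prod.snd)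
  have : IsClosed (M : Set B) := isClosed_c0MapSubalgebra hF horth hiso _
  have hM : M.toSubmodule ≤ LinearMap.range hF.c0MapLinear := by
    rintro _ ⟨b, -, rfl⟩
    exact ⟨b, rfl⟩
  let ψ : M →ₗ[ℂ] 𝒜.C0 :=
    (LinearEquiv.ofInjective _ hinj).symm.toLinearMap ∘ₗ Submodule.inclusion hM
  have hψ (m : M) : 𝒜.c0Map F (ψ m) = m :=
    LinearEquiv.ofInjective_symm_apply (h := hinj) hF.c0MapLinear (Submodule.inclusion hM m)
  have hψ_cstar (m : M) : ψ (Star.star m * m) = 𝒜.c0Mul (𝒜.c0Star (ψ m)) (ψ m) :=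
    hinj (by rw [hψ, c0Map_mul hF horth, c0Map_star hF, hψ]; rfl)
  let σ : Seminorm ℂ M := hρ.toSeminorm.comp ψ
  have hσ (m : M) : σ (Star.star m * m) = σ m ^ 2 :=
    (congrArg ρ (hψ_cstar m)).trans (hρ.cstar _)
  let a' : M := ⟨𝒜.c0Map F a, a, self_mem_supportedOn a, rfl⟩
  have ha' : ψ a' = a := hinj (hψ a')
  calc ρ a = σ a' := by rw [← ha']; rfl
    _ ≤ ‖a'‖ := σ.le_norm_of_cstar hσ a'
    _ = ‖𝒜.c0Map F a‖ := rfl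

end Functor

end CStarCategory

/-- Let `𝒜` be a C*-category, `B` a C*-algebra and `F : 𝒜 → B` a
C*-functor satisfying `F(f) F(g) = 0` whenever `f` and `g` are non-composable morphisms of
`𝒜`.  Suppose that `F` is isometric on each morphism set and that the induced
*-homomorphism `C*₀F : C*₀𝒜 → B` is injective.  Then the induced *-homomorphism
`C*F : C*𝒜 → B` is isometric; equivalently (as `C*₀𝒜` is dense in `C*𝒜`, whose norm is
the supremum of all C*-seminorms on `C*₀𝒜`), `‖C*₀F(a)‖ = sup {ρ(a) | ρ a C*-seminorm}`
for all `a ∈ C*₀𝒜`. -/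
theorem CStarCategory.c0Map_isometric (𝒜 : CStarCategory) (B : Type*)
    [NonUnitalCStarAlgebra B] (F : ∀ {x y : 𝒜.Obj}, 𝒜.Hom x y → B)
    (hF : 𝒜.IsCStarFunctorTo F)
    (horth : ∀ {x y z w : 𝒜.Obj} (f : 𝒜.Hom y z) (g : 𝒜.Hom x w),
      w ≠ y → F f * F g = 0)
    (hiso : ∀ {x y : 𝒜.Obj} (f : 𝒜.Hom x y), ‖F f‖ = ‖f‖)
    (hinj : Function.Injective (𝒜.c0Map F)) :
    ∀ a : 𝒜.C0, ‖𝒜.c0Map F a‖ = 𝒜.envNorm a := by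
  intro a
  have hnorm := isCStarSeminorm_norm_c0Map hF horth
  have hbound : ∀ r ∈ {r : ℝ | ∃ ρ : 𝒜.C0 → ℝ, 𝒜.IsCStarSeminorm ρ ∧ r = ρ a},
      r ≤ ‖𝒜.c0Map F a‖ := by
    rintro _ ⟨ρ, hρ, rfl⟩
    exact hρ.le_norm_c0Map hF horth hiso hinj a
  exact le_antisymm (le_csSup ⟨_, hbound⟩ ⟨_, hnorm, rfl⟩) (csSup_le ⟨_, _, hnorm, rfl⟩ hbound)
end

section
/- Let 𝒜' be a C*-category with finitely many objects, say N objects, and let ‖·‖ be any C*-norm on the *-algebra C*₀𝒜' whose restriction to each morphism set 𝒜'(x,y) equals the given norm. Then for every a = Σ_{x,y} a_{xy} ∈ C*₀𝒜' with a_{xy} ∈ 𝒜'(x,y), one has max_{x,y} ‖a_{xy}‖ ≤ ‖a‖ ≤ N² max_{x,y} ‖a_{xy}‖. Consequently, C*₀𝒜' is already complete in ‖·‖, and ‖·‖ is the unique C*-norm on C*₀𝒜' restricting to the given norms on morphism sets. -/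
/-! The lower bound comes from compressing `a` by contractions: for `u ∈ 𝒜(y,y)` and
`v ∈ 𝒜(x,x)` one has `u · a · v = u a_{xy} v`, so `‖u a_{xy} v‖ ≤ ‖a‖`, and `u`, `v` may run
through approximate units of the C*-algebras `𝒜(y,y)` and `𝒜(x,x)`. These also act as
approximate units on `𝒜(x,y)` because of the C*-identity: `‖f v - f‖² ≤ 2 ‖f*f v - f*f‖` for
a contraction `v`. The upper bound is the triangle inequality over the `N²` components.
Hence `‖·‖` is equivalent to the complete norm `max ‖a_{xy}‖`, which gives completeness, and
two equivalent C*-seminorms coincide: iterating `a ↦ a*a` turns `ρ ≤ N² σ` into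
`ρ(a)^(2^n) ≤ N² σ(a)^(2^n)` for every `n`. -/

universe u v

/-- A C*-norm on `C*₀𝒜` restricting to the given norm on each morphism set of `𝒜`:
a C*-seminorm that is definite and satisfies `‖a_{xy}‖ = (the given norm)` on the
morphism sets. -/
structure CStarCategory.IsCompatibleCStarNorm (𝒜 : CStarCategory) (nn : 𝒜.C0 → ℝ) : Prop where
  seminorm : 𝒜.IsCStarSeminorm nn
  definite : ∀ a, nn a = 0 → a = 0
  restricts : ∀ (x y : 𝒜.Obj) (f : 𝒜.Hom x y), nn (𝒜.ofHom x y f) = ‖f‖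

namespace CStarCategory

open Filter Topology

variable {𝒜 : CStarCategory} {x y z : 𝒜.Obj}

lemma comp_zero (f : 𝒜.Hom y z) : 𝒜.comp f (0 : 𝒜.Hom x y) = 0 := by
  simpa using 𝒜.comp_add f 0 0

lemma zero_comp (f : 𝒜.Hom x y) : 𝒜.comp (0 : 𝒜.Hom y z) f = 0 := by
  simpa using 𝒜.add_comp 0 0 f

lemma comp_sub (f : 𝒜.Hom y z) (g g' : 𝒜.Hom x y) :
    𝒜.comp f (g - g') = 𝒜.comp f g - 𝒜.comp f g' :=
  (AddMonoidHom.mk' (𝒜.comp f) (𝒜.comp_add f)).map_sub g g'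

lemma sub_comp (f f' : 𝒜.Hom y z) (g : 𝒜.Hom x y) :
    𝒜.comp (f - f') g = 𝒜.comp f g - 𝒜.comp f' g :=
  (AddMonoidHom.mk' (𝒜.comp · g) fun f f' => 𝒜.add_comp f f' g).map_sub f f'

lemma star_sub (f g : 𝒜.Hom x y) : 𝒜.star (f - g) = 𝒜.star f - 𝒜.star g :=
  (AddMonoidHom.mk' 𝒜.star 𝒜.star_add).map_sub f g

lemma norm_le_norm_star (f : 𝒜.Hom x y) : ‖f‖ ≤ ‖𝒜.star f‖ := by
  have h : ‖f‖ ^ 2 ≤ ‖𝒜.star f‖ * ‖f‖ :=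
    𝒜.norm_star_comp_self f ▸ 𝒜.norm_comp_le (𝒜.star f) f
  rcases (norm_nonneg f).eq_or_lt with h0 | hpos
  · exact h0 ▸ norm_nonneg _
  · nlinarith

lemma norm_star (f : 𝒜.Hom x y) : ‖𝒜.star f‖ = ‖f‖ :=
  le_antisymm (by simpa only [𝒜.star_star] using norm_le_norm_star (𝒜.star f))
    (norm_le_norm_star f)

noncomputable instance : NonUnitalCStarAlgebra (𝒜.Hom x x) :=
  { (inferInstance : NormedAddCommGroup (𝒜.Hom x x)),
    (inferInstance : NormedSpace ℂ (𝒜.Hom x x)),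
    (inferInstance : CompleteSpace (𝒜.Hom x x)) with
  mul := 𝒜.comp
  left_distrib := 𝒜.comp_add
  right_distrib := 𝒜.add_comp
  zero_mul := zero_comp
  mul_zero := comp_zero
  mul_assoc := 𝒜.comp_assoc
  star := 𝒜.star
  star_involutive := 𝒜.star_star
  star_mul := 𝒜.star_comp
  star_add := 𝒜.star_add
  norm_mul_le := 𝒜.norm_comp_le
  norm_mul_self_le f := (𝒜.norm_star_comp_self f).trans (pow_two ‖f‖) |>.ge
  smul_assoc c f g := 𝒜.smul_comp c f g
  smul_comm c f g := (𝒜.comp_smul c f g).symm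
  star_smul := 𝒜.star_smul }

lemma _root_.CStarAlgebra.exists_isApproximateUnit_eventually_norm_le_one (A : Type*)
    [NonUnitalCStarAlgebra A] : ∃ l : Filter A, l.IsApproximateUnit ∧ ∀ᶠ v in l, ‖v‖ ≤ 1 := by
  let _ := CStarAlgebra.spectralOrder A
  have _ := CStarAlgebra.spectralOrderedRing A
  have hl := CStarAlgebra.increasingApproximateUnit A
  exact ⟨_, hl.toIsApproximateUnit, hl.eventually_norm⟩

lemma star_comp_sub_comp_comp_sub (f : 𝒜.Hom x y) (v : 𝒜.Hom x x) :
    𝒜.comp (𝒜.star (𝒜.comp f v - f)) (𝒜.comp f v - f) =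
      𝒜.comp (𝒜.star (𝒜.comp (𝒜.comp (𝒜.star f) f) v - 𝒜.comp (𝒜.star f) f)) v -
        𝒜.star (𝒜.comp (𝒜.comp (𝒜.star f) f) v - 𝒜.comp (𝒜.star f) f) := by
  simp only [star_sub, 𝒜.star_comp, 𝒜.star_star, sub_comp, comp_sub, 𝒜.comp_assoc]

-- The C*-identity reduces the approximate-unit property on `𝒜(x,y)` to the one on `𝒜(x,x)`.
lemma sq_norm_comp_sub_le (f : 𝒜.Hom x y) {v : 𝒜.Hom x x} (hv : ‖v‖ ≤ 1) :
    ‖𝒜.comp f v - f‖ ^ 2 ≤ 2 * ‖𝒜.comp (𝒜.comp (𝒜.star f) f) v - 𝒜.comp (𝒜.star f) f‖ := by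
  set d := 𝒜.comp (𝒜.comp (𝒜.star f) f) v - 𝒜.comp (𝒜.star f) f
  calc ‖𝒜.comp f v - f‖ ^ 2 = ‖𝒜.comp (𝒜.star d) v - 𝒜.star d‖ := by
        rw [← 𝒜.norm_star_comp_self, star_comp_sub_comp_comp_sub]
    _ ≤ ‖d‖ * ‖v‖ + ‖d‖ := by
        grw [norm_sub_le, 𝒜.norm_comp_le, norm_star]
    _ ≤ 2 * ‖d‖ := by nlinarith [norm_nonneg d]

lemma tendsto_comp_of_isApproximateUnit (f : 𝒜.Hom x y) {l : Filter (𝒜.Hom x x)}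
    (hl : l.IsApproximateUnit) (hl₁ : ∀ᶠ v in l, ‖v‖ ≤ 1) :
    Tendsto (𝒜.comp f ·) l (𝓝 f) := by
  set m := 𝒜.comp (𝒜.star f) f
  have hm : Tendsto (fun v => ‖𝒜.comp m v - m‖) l (𝓝 0) :=
    tendsto_iff_norm_sub_tendsto_zero.mp (hl.tendsto_mul_left m)
  rw [tendsto_iff_norm_sub_tendsto_zero]
  refine squeeze_zero' (g := fun v => √(2 * ‖𝒜.comp m v - m‖))
    (.of_forall fun _ => norm_nonneg _) ?_ (by simpa using (hm.const_mul 2).sqrt)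
  filter_upwards [hl₁] with v hv
  exact Real.le_sqrt_of_sq_le (sq_norm_comp_sub_le f hv)

lemma norm_le_of_forall_norm_comp_le_right (f : 𝒜.Hom x y) {C : ℝ}
    (h : ∀ v : 𝒜.Hom x x, ‖v‖ ≤ 1 → ‖𝒜.comp f v‖ ≤ C) : ‖f‖ ≤ C := by
  obtain ⟨l, hl, hl₁⟩ := CStarAlgebra.exists_isApproximateUnit_eventually_norm_le_one (𝒜.Hom x x)
  have := hl.neBot
  exact le_of_tendsto (tendsto_comp_of_isApproximateUnit f hl hl₁).norm (hl₁.mono h)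

lemma norm_le_of_forall_norm_comp_le_left (f : 𝒜.Hom x y) {C : ℝ}
    (h : ∀ u : 𝒜.Hom y y, ‖u‖ ≤ 1 → ‖𝒜.comp u f‖ ≤ C) : ‖f‖ ≤ C := by
  rw [← norm_star]
  refine norm_le_of_forall_norm_comp_le_right _ fun v hv => ?_
  rw [← norm_star, 𝒜.star_comp, 𝒜.star_star]
  exact h _ ((norm_star v).trans_le hv)

section Product

open scoped Classical

lemma c0Mul_add_left (a a' b : 𝒜.C0) :
    𝒜.c0Mul (a + a') b = 𝒜.c0Mul a b + 𝒜.c0Mul a' b := by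
  refine DFinsupp.sum_add_index (fun p => ?_) (fun p f f' => ?_)
  · simp [zero_comp]
  · rw [← DFinsupp.sum_add]
    congr 1; funext q g
    split_ifs <;> simp [𝒜.add_comp]

lemma c0Mul_add_right (a b b' : 𝒜.C0) :
    𝒜.c0Mul a (b + b') = 𝒜.c0Mul a b + 𝒜.c0Mul a b' := by
  simp only [c0Mul, ← DFinsupp.sum_add]
  congr 1; funext ⟨p₁, p₂⟩ f
  refine DFinsupp.sum_add_index (fun ⟨q₁, q₂⟩ => ?_) (fun ⟨q₁, q₂⟩ g g' => ?_)
  all_goals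
    dsimp only
    split_ifs with h
    · subst h; simp [comp_zero, 𝒜.comp_add]
    · simp

lemma c0Mul_single_single (p q : 𝒜.Obj × 𝒜.Obj) (f : 𝒜.Hom p.1 p.2) (g : 𝒜.Hom q.1 q.2) :
    𝒜.c0Mul (DFinsupp.single p f) (DFinsupp.single q g) =
      if h : q.2 = p.1 then DFinsupp.single (q.1, p.2) (𝒜.comp f (h ▸ g)) else 0 := by
  obtain ⟨p₁, p₂⟩ := p
  obtain ⟨q₁, q₂⟩ := q
  rw [c0Mul, DFinsupp.sum_single_index, DFinsupp.sum_single_index]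
  · dsimp only
    split_ifs with h
    · subst h; simp [comp_zero]
    · simp
  · simp [zero_comp]

lemma c0Mul_zero_left (b : 𝒜.C0) : 𝒜.c0Mul 0 b = 0 := by
  simpa using c0Mul_add_left 0 0 b

lemma c0Mul_zero_right (a : 𝒜.C0) : 𝒜.c0Mul a 0 = 0 := by
  simpa using c0Mul_add_right a 0 0

lemma c0Mul_ofHom_c0Mul_ofHom (a : 𝒜.C0) (u : 𝒜.Hom y y) (v : 𝒜.Hom x x) :
    𝒜.c0Mul (𝒜.ofHom y y u) (𝒜.c0Mul a (𝒜.ofHom x x v)) =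
      𝒜.ofHom x y (𝒜.comp u (𝒜.comp (a (x, y)) v)) := by
  unfold ofHom
  induction a using DFinsupp.induction with
  | h0 => simp [c0Mul_zero_left, c0Mul_zero_right, comp_zero, zero_comp]
  | ha p f rest _ _ ih =>
    rw [c0Mul_add_left, c0Mul_add_right, ih, DFinsupp.add_apply, 𝒜.add_comp, 𝒜.comp_add,
      DFinsupp.single_add, add_left_inj]
    obtain ⟨p₁, p₂⟩ := p
    rw [c0Mul_single_single]
    by_cases h₁ : x = p₁
    · subst h₁
      by_cases h₂ : p₂ = y
      · subst h₂
        simp [c0Mul_single_single]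
      · simp [c0Mul_single_single, h₂, comp_zero, zero_comp]
    · simp [h₁, Ne.symm h₁, c0Mul_zero_right, comp_zero, zero_comp]

end Product

lemma _root_.le_of_forall_pow_two_pow_le_mul_s12 {a b C : ℝ} (hb : 0 ≤ b)
    (h : ∀ n : ℕ, a ^ 2 ^ n ≤ C * b ^ 2 ^ n) : a ≤ b := by
  by_contra! hba
  rcases hb.eq_or_lt with rfl | hb
  · simpa [hba.not_ge] using h 0
  have ht : 1 < a / b := (one_lt_div hb).mpr hba
  obtain ⟨n, hn⟩ := pow_unbounded_of_one_lt C ht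
  have hC : (a / b) ^ 2 ^ n ≤ C := by
    rw [div_pow, div_le_iff₀ (by positivity)]
    exact h n
  exact (hn.trans_le ((pow_le_pow_right₀ ht.le n.lt_two_pow_self.le).trans hC)).false

namespace IsCStarSeminorm

variable {ρ σ : 𝒜.C0 → ℝ}

lemma map_zero (hρ : 𝒜.IsCStarSeminorm ρ) : ρ 0 = 0 := by
  simpa using hρ.smul_eq 0 0

lemma apply_iterate_star_mul_self (hρ : 𝒜.IsCStarSeminorm ρ) (a : 𝒜.C0) (n : ℕ) :
    ρ ((fun b => 𝒜.c0Mul (𝒜.c0Star b) b)^[n] a) = ρ a ^ 2 ^ n := by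
  induction n with
  | zero => simp
  | succ n ih => rw [Function.iterate_succ_apply', hρ.cstar, ih, ← pow_mul, pow_succ]

lemma le_of_le_const_mul (hρ : 𝒜.IsCStarSeminorm ρ) (hσ : 𝒜.IsCStarSeminorm σ) {C : ℝ}
    (h : ∀ a, ρ a ≤ C * σ a) (a : 𝒜.C0) : ρ a ≤ σ a :=
  le_of_forall_pow_two_pow_le_mul_s12 (hσ.nonneg a) fun n => by
    simpa only [hρ.apply_iterate_star_mul_self, hσ.apply_iterate_star_mul_self] using
      h ((fun b => 𝒜.c0Mul (𝒜.c0Star b) b)^[n] a)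

end IsCStarSeminorm

section RestrictingSeminorm

variable {ρ : 𝒜.C0 → ℝ}

lemma norm_apply_le (hρ : 𝒜.IsCStarSeminorm ρ)
    (hres : ∀ (x y : 𝒜.Obj) (f : 𝒜.Hom x y), ρ (𝒜.ofHom x y f) = ‖f‖)
    (a : 𝒜.C0) (p : 𝒜.Obj × 𝒜.Obj) : ‖a p‖ ≤ ρ a := by
  obtain ⟨x, y⟩ := p
  have ha := hρ.nonneg a
  refine norm_le_of_forall_norm_comp_le_right _ fun v hv =>
    norm_le_of_forall_norm_comp_le_left _ fun u hu => ?_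
  calc ‖𝒜.comp u (𝒜.comp (a (x, y)) v)‖
      = ρ (𝒜.c0Mul (𝒜.ofHom y y u) (𝒜.c0Mul a (𝒜.ofHom x x v))) := by
        rw [c0Mul_ofHom_c0Mul_ofHom, hres]
    _ ≤ ‖u‖ * (ρ a * ‖v‖) := by
        grw [hρ.mul_le, hρ.mul_le, hres, hres]
        exact hρ.nonneg _
    _ ≤ ρ a := by
        grw [hu, hv, one_mul, mul_one]

lemma apply_le_sum_norm_apply [Fintype 𝒜.Obj] (hρ : 𝒜.IsCStarSeminorm ρ)
    (hres : ∀ (x y : 𝒜.Obj) (f : 𝒜.Hom x y), ρ (𝒜.ofHom x y f) = ‖f‖) (a : 𝒜.C0) :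
    ρ a ≤ ∑ p, ‖a p‖ := by
  classical
  calc ρ a = ρ (∑ p ∈ a.support, DFinsupp.single p (a p)) := by
        conv_lhs => rw [← DFinsupp.sum_single (f := a)]
        rfl
    _ ≤ ∑ p ∈ a.support, ρ (DFinsupp.single p (a p)) :=
        Finset.le_sum_of_subadditive ρ hρ.map_zero.le hρ.add_le _ _
    _ = ∑ p ∈ a.support, ‖a p‖ := Finset.sum_congr rfl fun p _ => hres p.1 p.2 (a p)
    _ ≤ ∑ p, ‖a p‖ :=
        Finset.sum_le_sum_of_subset_of_nonneg (Finset.subset_univ _) fun _ _ _ => norm_nonneg _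

lemma exists_tendsto_of_cauchy [Fintype 𝒜.Obj] (hρ : 𝒜.IsCStarSeminorm ρ)
    (hres : ∀ (x y : 𝒜.Obj) (f : 𝒜.Hom x y), ρ (𝒜.ofHom x y f) = ‖f‖) (u : ℕ → 𝒜.C0)
    (hu : ∀ ε : ℝ, 0 < ε → ∃ N : ℕ, ∀ m n : ℕ, N ≤ m → N ≤ n → ρ (u m - u n) < ε) :
    ∃ l : 𝒜.C0, Tendsto (fun n => ρ (u n - l)) atTop (𝓝 0) := by
  have hcauchy (p : 𝒜.Obj × 𝒜.Obj) : CauchySeq fun n => u n p := by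
    refine Metric.cauchySeq_iff.mpr fun ε hε => ?_
    obtain ⟨N, hN⟩ := hu ε hε
    refine ⟨N, fun m hm n hn => ?_⟩
    rw [dist_eq_norm, ← DFinsupp.sub_apply]
    exact (norm_apply_le hρ hres _ p).trans_lt (hN m n hm hn)
  choose l hl using fun p => cauchySeq_tendsto_of_complete (hcauchy p)
  refine ⟨DFinsupp.equivFunOnFintype.symm l, squeeze_zero (fun n => hρ.nonneg _)
    (fun n => apply_le_sum_norm_apply hρ hres _) ?_⟩
  have hsum := tendsto_finsetSum Finset.univ fun p _ =>
    tendsto_iff_norm_sub_tendsto_zero.mp (hl p)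
  rw [Finset.sum_const_zero] at hsum
  exact hsum.congr fun n => rfl

lemma apply_le_card_sq_mul_iSup [Fintype 𝒜.Obj] (hρ : 𝒜.IsCStarSeminorm ρ)
    (hres : ∀ (x y : 𝒜.Obj) (f : 𝒜.Hom x y), ρ (𝒜.ofHom x y f) = ‖f‖) (a : 𝒜.C0) :
    ρ a ≤ (Fintype.card 𝒜.Obj : ℝ) ^ 2 * ⨆ p : 𝒜.Obj × 𝒜.Obj, ‖a p‖ :=
  calc ρ a ≤ ∑ p, ‖a p‖ := apply_le_sum_norm_apply hρ hres a
    _ ≤ Fintype.card (𝒜.Obj × 𝒜.Obj) • ⨆ p, ‖a p‖ :=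
      Finset.sum_le_card_nsmul _ _ _ fun p _ =>
        le_ciSup (f := fun p => ‖a p‖) (Finite.bddAbove_range _) p
    _ = _ := by rw [nsmul_eq_mul, Fintype.card_prod, Nat.cast_mul, sq]

lemma apply_le_of_restricts [Fintype 𝒜.Obj] {σ : 𝒜.C0 → ℝ} (hρ : 𝒜.IsCStarSeminorm ρ)
    (hρres : ∀ (x y : 𝒜.Obj) (f : 𝒜.Hom x y), ρ (𝒜.ofHom x y f) = ‖f‖)
    (hσ : 𝒜.IsCStarSeminorm σ)
    (hσres : ∀ (x y : 𝒜.Obj) (f : 𝒜.Hom x y), σ (𝒜.ofHom x y f) = ‖f‖) (a : 𝒜.C0) :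
    ρ a ≤ σ a :=
  hρ.le_of_le_const_mul hσ (fun b => (apply_le_card_sq_mul_iSup hρ hρres b).trans <|
    mul_le_mul_of_nonneg_left
      (Real.iSup_le (fun p => norm_apply_le hσ hσres b p) (hσ.nonneg b)) (by positivity)) a

end RestrictingSeminorm

end CStarCategory

open scoped Classical in
/-- Let `𝒜'` be a C*-category with finitely many objects, say `N`
objects, and let `‖·‖` be any C*-norm on the *-algebra `C*₀𝒜'` whose restriction to each
morphism set `𝒜'(x,y)` equals the given norm.  Then for every
`a = Σ_{x,y} a_{xy} ∈ C*₀𝒜'` (`a_{xy} ∈ 𝒜'(x,y)`) one has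
`max_{x,y} ‖a_{xy}‖ ≤ ‖a‖ ≤ N² max_{x,y} ‖a_{xy}‖`.  Consequently `C*₀𝒜'` is already
complete in `‖·‖` (every Cauchy sequence converges), and `‖·‖` is the unique C*-norm on
`C*₀𝒜'` restricting to the given norms on morphism sets. -/
theorem CStarCategory.norm_estimate_of_finite (𝒜 : CStarCategory) [Fintype 𝒜.Obj]
    (nn : 𝒜.C0 → ℝ) (hnn : 𝒜.IsCompatibleCStarNorm nn) :
    (∀ (a : 𝒜.C0) (p : 𝒜.Obj × 𝒜.Obj), ‖a p‖ ≤ nn a) ∧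
    (∀ a : 𝒜.C0, nn a ≤ (Fintype.card 𝒜.Obj : ℝ) ^ 2 * ⨆ p : 𝒜.Obj × 𝒜.Obj, ‖a p‖) ∧
    (∀ u : ℕ → 𝒜.C0,
      (∀ ε : ℝ, 0 < ε → ∃ N : ℕ, ∀ m n : ℕ, N ≤ m → N ≤ n → nn (u m - u n) < ε) →
      ∃ l : 𝒜.C0, Filter.Tendsto (fun n => nn (u n - l)) Filter.atTop (nhds 0)) ∧
    (∀ nn' : 𝒜.C0 → ℝ, 𝒜.IsCompatibleCStarNorm nn' → nn' = nn) := by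
  obtain ⟨hρ, -, hres⟩ := hnn
  refine ⟨norm_apply_le hρ hres, apply_le_card_sq_mul_iSup hρ hres,
    exists_tendsto_of_cauchy hρ hres, fun nn' ⟨hρ', _, hres'⟩ => funext fun a => ?_⟩
  exact (apply_le_of_restricts hρ' hres' hρ hres a).antisymm
    (apply_le_of_restricts hρ hres hρ' hres' a)
end
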